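/- arXiv:1001.1828 — 5 statements merged into one kernel-verified Lean document; each statement's English description precedes it below -/
import Mathlib

section
/- Let K : ℝ → ℝ satisfy assumption (K) and let (h_N) be a bandwidth sequence with N/h_N → ζ ∈ [1,∞). Then for every fixed s ∈ (0,1], the kernel weight sums converge: ∑_{i=1}^{⌊Ns⌋} (1/h_N) K((i − ⌊Ns⌋)/h_N) → ζ ∫_0^s K(ζ(r−s)) dr as N → ∞. -/
/-!
The weight sum is the right-endpoint Riemann sum of `K` with mesh `1 / h_N` over
`[-⌊Ns⌋ / h_N, 0]`. On each cell the Lipschitz kernel stays within `L / h_N` of its value at the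
node, so the sum is within `⌊Ns⌋ L / h_N² = (⌊Ns⌋ / h_N) · L / h_N → 0` of `∫_{-⌊Ns⌋/h_N}^0 K`,
while `⌊Ns⌋ / h_N → sζ`. The substitution `u = ζ (r - s)` identifies `∫_{-sζ}^0 K` with the
claimed limit.
-/

open MeasureTheory Filter Finset Topology

section Lipschitz

variable {f : ℝ → ℝ} {L : NNReal}

theorem LipschitzWith.abs_mul_sub_integral_le (hf : LipschitzWith L f) (x δ : ℝ) :
    |δ * f (x + δ) - ∫ u in x..x + δ, f u| ≤ L * δ ^ 2 := by
  have hconst : δ * f (x + δ) = ∫ _ in x..x + δ, f (x + δ) := by simp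
  rw [hconst, ← intervalIntegral.integral_sub intervalIntegrable_const
    (hf.continuous.intervalIntegrable _ _)]
  have hcell : ∀ u ∈ Set.uIoc x (x + δ), ‖f (x + δ) - f u‖ ≤ L * |δ| := fun u hu =>
    calc ‖f (x + δ) - f u‖ ≤ L * |x + δ - u| := hf.dist_le_mul _ _
      _ ≤ L * |δ| := by
        refine mul_le_mul_of_nonneg_left ?_ L.coe_nonneg
        simpa using Set.abs_sub_right_of_mem_uIcc (Set.uIoc_subset_uIcc hu)
  calc _ ≤ L * |δ| * |x + δ - x| := intervalIntegral.norm_integral_le_of_norm_le_const hcell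
    _ = L * δ ^ 2 := by rw [add_sub_cancel_left, mul_assoc, abs_mul_abs_self, sq]

theorem LipschitzWith.abs_riemannSum_sub_integral_le (hf : LipschitzWith L f) (a δ : ℝ) (n : ℕ) :
    |∑ i ∈ Icc 1 n, δ * f (a + i * δ) - ∫ u in a..a + n * δ, f u| ≤ n * L * δ ^ 2 := by
  induction n with
  | zero => simp
  | succ n ih =>
    have hsplit := intervalIntegral.integral_add_adjacent_intervals
      (hf.continuous.intervalIntegrable (μ := volume) a (a + n * δ))
      (hf.continuous.intervalIntegrable _ (a + n * δ + δ))
    have hcell := hf.abs_mul_sub_integral_le (a + n * δ) δ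
    rw [sum_Icc_succ_top (by omega), Nat.cast_succ, add_one_mul, ← add_assoc, ← hsplit]
    calc _ = |(∑ i ∈ Icc 1 n, δ * f (a + i * δ) - ∫ u in a..a + n * δ, f u)
          + (δ * f (a + n * δ + δ) - ∫ u in a + n * δ..a + n * δ + δ, f u)| := by ring_nf
      _ ≤ _ := abs_add_le _ _
      _ ≤ n * L * δ ^ 2 + L * δ ^ 2 := add_le_add ih hcell
      _ = _ := by ring

theorem LipschitzWith.tendsto_sum_mul_comp_sub_mul (hf : LipschitzWith L f) {n : ℕ → ℕ}
    {δ : ℕ → ℝ} {t : ℝ} (hδ : Tendsto δ atTop (𝓝 0))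
    (hnδ : Tendsto (fun N => n N * δ N) atTop (𝓝 t)) :
    Tendsto (fun N => ∑ i ∈ Icc 1 (n N), δ N * f ((i - n N) * δ N)) atTop
      (𝓝 (∫ u in -t..0, f u)) := by
  have hprimitive : Continuous fun b => ∫ u in b..0, f u :=
    (intervalIntegral.continuous_primitive (hf.continuous.intervalIntegrable (μ := volume))
      0).neg.congr fun b => (intervalIntegral.integral_symm 0 b).symm
  have hintegral : Tendsto (fun N => ∫ u in -(n N * δ N)..0, f u) atTop
      (𝓝 (∫ u in -t..0, f u)) := (hprimitive.tendsto _).comp hnδ.neg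
  have herror : Tendsto (fun N => n N * L * δ N ^ 2) atTop (𝓝 0) := by
    simpa [sq, ← mul_assoc, mul_right_comm _ (L : ℝ)] using (hnδ.mul_const (L : ℝ)).mul hδ
  have hclose : ∀ N, ‖∑ i ∈ Icc 1 (n N), δ N * f ((i - n N) * δ N)
      - ∫ u in -(n N * δ N)..0, f u‖ ≤ n N * L * δ N ^ 2 := fun N => by
    have hnode : ∀ i : ℕ, ((i : ℝ) - n N) * δ N = -(n N * δ N) + i * δ N := fun i => by ring
    have hend : -(n N * δ N) + n N * δ N = 0 := by ring
    simpa only [hnode, hend, Real.norm_eq_abs] using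
      hf.abs_riemannSum_sub_integral_le (-(n N * δ N)) (δ N) (n N)
  simpa using (squeeze_zero_norm hclose herror).add hintegral

end Lipschitz

theorem tendsto_div_of_tendsto_div_natCast {u h : ℕ → ℝ} {a ζ : ℝ}
    (hu : Tendsto (fun N => u N / N) atTop (𝓝 a))
    (hh : Tendsto (fun N : ℕ => (N : ℝ) / h N) atTop (𝓝 ζ)) :
    Tendsto (fun N => u N / h N) atTop (𝓝 (a * ζ)) :=
  (hu.mul hh).congr' <| (eventually_ne_atTop 0).mono fun N hN => by
    rw [div_mul_div_cancel₀ (Nat.cast_ne_zero.2 hN)]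

theorem kernel_weight_sum_convergence_general
    (K : ℝ → ℝ) (L : ℝ)
    (hK_lip : ∀ z₁ z₂ : ℝ, |K z₁ - K z₂| ≤ L * |z₁ - z₂|)
    (h : ℕ → ℝ)
    (ζ : ℝ)
    (hlim : Tendsto (fun N : ℕ => (N : ℝ) / h N) atTop (nhds ζ))
    (s : ℝ) (hs : s ∈ Set.Ioc (0 : ℝ) 1) :
    Tendsto
      (fun N : ℕ =>
        ∑ i ∈ Finset.Icc 1 ⌊(N : ℝ) * s⌋₊,
          (1 / h N) * K (((i : ℝ) - (⌊(N : ℝ) * s⌋₊ : ℝ)) / h N))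
      atTop
      (nhds (ζ * ∫ r in (0 : ℝ)..s, K (ζ * (r - s)))) := by
  have hL : 0 ≤ L := (abs_nonneg _).trans (by simpa using hK_lip 1 0)
  have hK : LipschitzWith L.toNNReal K := .of_dist_le_mul fun x y => by
    simpa [Real.dist_eq, Real.coe_toNNReal _ hL] using hK_lip x y
  have hmesh : Tendsto (fun N => 1 / h N) atTop (𝓝 0) := by
    simpa using tendsto_div_of_tendsto_div_natCast tendsto_one_div_atTop_nhds_zero_nat hlim
  have hfloor : Tendsto (fun N : ℕ => (⌊(N : ℝ) * s⌋₊ : ℝ) / h N) atTop (𝓝 (s * ζ)) := by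
    refine tendsto_div_of_tendsto_div_natCast ?_ hlim
    simpa [mul_comm, Function.comp_def] using
      (tendsto_nat_floor_mul_div_atTop hs.1.le).comp tendsto_natCast_atTop_atTop
  have hlimit : ζ * ∫ r in (0 : ℝ)..s, K (ζ * (r - s)) = ∫ u in -(s * ζ)..0, K u := by
    simp_rw [mul_sub, intervalIntegral.mul_integral_comp_mul_sub, mul_zero, zero_sub, sub_self,
      mul_comm ζ s]
  rw [hlimit]
  simpa only [mul_one_div] using
    hK.tendsto_sum_mul_comp_sub_mul hmesh (by simpa only [mul_one_div] using hfloor)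

/-- Under assumption (K) on the kernel and a bandwidth sequence with
`N / h_N → ζ ∈ [1,∞)`, for every fixed `s ∈ (0,1]` the kernel weight sums converge:
`∑_{i=1}^{⌊Ns⌋} (1/h_N) K((i − ⌊Ns⌋)/h_N) → ζ ∫_0^s K(ζ(r−s)) dr` as `N → ∞`. -/
theorem kernel_weight_sum_convergence
    (K : ℝ → ℝ) (L : ℝ)
    (hK_lip : ∀ z₁ z₂ : ℝ, |K z₁ - K z₂| ≤ L * |z₁ - z₂|)
    (hK_nonneg : ∀ z, 0 ≤ K z)
    (hK_int : Integrable K)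
    (hK_dens : ∫ z, K z = 1)
    (hK_mean_int : Integrable (fun z => z * K z))
    (hK_mean : ∫ z, z * K z = 0)
    (hK_var : Integrable (fun z => z ^ 2 * K z))
    (h : ℕ → ℝ) (hpos : ∀ N, 0 < h N)
    (ζ : ℝ) (hζ : 1 ≤ ζ)
    (hlim : Tendsto (fun N : ℕ => (N : ℝ) / h N) atTop (nhds ζ))
    (s : ℝ) (hs : s ∈ Set.Ioc (0 : ℝ) 1) :
    Tendsto
      (fun N : ℕ =>
        ∑ i ∈ Finset.Icc 1 ⌊(N : ℝ) * s⌋₊,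
          (1 / h N) * K (((i : ℝ) - (⌊(N : ℝ) * s⌋₊ : ℝ)) / h N))
      atTop
      (nhds (ζ * ∫ r in (0 : ℝ)..s, K (ζ * (r - s)))) :=
  kernel_weight_sum_convergence_general K L hK_lip h ζ hlim s hs
end

section
/- Let K : ℝ → ℝ satisfy assumption (K), let (h_N) be a bandwidth sequence with N/h_N → ζ ∈ [1,∞), let m₀ be a generic alternative, and fix a change point q ∈ ℕ (change-point model CP1). Then for every fixed s ∈ (0,1], h_N^{1/2} N^{−3/2} ∑_{i=1}^{⌊Ns⌋} (1/h_N) K((i − ⌊Ns⌋)/h_N) ∑_{j=1}^{i−1} m₀((j − q)/h_N) → ζ^{−1/2} ∫_0^s K(ζ(r−s)) (∫_0^{ζ r} m₀(t) dt) dr as N → ∞. -/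
/-!
Both sums are Riemann sums: `a⁻¹ ∑_{j=1}^{b} φ j` is the integral of the step function
`u ↦ φ ⌈a u⌉` over `(0, b / a]`, so dominated convergence turns pointwise convergence of the
step functions into convergence of the sums. At `i ≈ N r` the inner sum, of mesh `1 / h_N`, tends
to `∫_0^{ζ r} m₀`; the outer one, of mesh `1 / N`, then tends to `∫_0^s K(ζ(r-s)) ∫_0^{ζ r} m₀`,
and the prefactor `h_N^{1/2} N^{-3/2} = (h_N / N)^{1/2} N⁻¹` supplies `ζ^{-1/2}`.
-/

open MeasureTheory Filter Topology

noncomputable def riemannSum (a : ℝ) (b : ℕ) (φ : ℕ → ℝ) : ℝ := a⁻¹ * ∑ j ∈ Finset.Icc 1 b, φ j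

lemma sum_Icc_one_eq_sum_range {M : Type*} [AddCommMonoid M] (φ : ℕ → M) (b : ℕ) :
    ∑ j ∈ Finset.Icc 1 b, φ j = ∑ k ∈ Finset.range b, φ (k + 1) := by
  rw [Finset.range_eq_Ico, Finset.sum_Ico_add' φ 0 b (c := 1), Finset.Ico_add_one_right_eq_Icc]

lemma natCeil_mul_eq_of_mem_uIoc {a u : ℝ} (ha : 0 < a) {k : ℕ}
    (hu : u ∈ Set.uIoc ((k : ℝ) / a) ((k + 1 : ℕ) / a)) : ⌈a * u⌉₊ = k + 1 := by
  rw [Set.uIoc_of_le (by gcongr; simp)] at hu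
  rw [Nat.ceil_eq_iff k.succ_ne_zero, Nat.succ_sub_one]
  constructor
  · simpa [div_lt_iff₀', ha] using hu.1
  · simpa [le_div_iff₀', ha] using hu.2

lemma riemannSum_eq_integral (φ : ℕ → ℝ) {a : ℝ} (ha : 0 < a) (b : ℕ) :
    riemannSum a b φ = ∫ u in (0 : ℝ)..(b / a), φ ⌈a * u⌉₊ := by
  have hstep : ∀ k : ℕ, Set.EqOn (fun _ => φ (k + 1)) (fun u => φ ⌈a * u⌉₊)
      (Set.uIoc ((k : ℝ) / a) ((k + 1 : ℕ) / a)) := fun k u hu => by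
    simp only [natCeil_mul_eq_of_mem_uIoc ha hu]
  have hint := intervalIntegral.sum_integral_adjacent_intervals (μ := volume)
    (a := fun k : ℕ => (k : ℝ) / a) (n := b) (f := fun u => φ ⌈a * u⌉₊)
    fun k _ => intervalIntegrable_const.congr (hstep k)
  simp only [Nat.cast_zero, zero_div] at hint
  rw [← hint, riemannSum, sum_Icc_one_eq_sum_range, Finset.mul_sum]
  refine Finset.sum_congr rfl fun k _ => ?_
  rw [← intervalIntegral.integral_congr_ae (ae_of_all _ fun u hu => hstep k hu),
    intervalIntegral.integral_const, smul_eq_mul]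
  push_cast
  field_simp
  ring

lemma tendsto_indicator_Ioc_of_tendsto {ι : Type*} {l : Filter ι} {F : ι → ℝ → ℝ} {ψ : ℝ → ℝ}
    {x : ι → ℝ} {c u : ℝ} (hx : Tendsto x l (𝓝 c)) (huc : u ≠ c)
    (hF : u ∈ Set.Ioo 0 c → Tendsto (fun n => F n u) l (𝓝 (ψ u))) :
    Tendsto (fun n => (Set.Ioc 0 (x n)).indicator (F n) u) l
      (𝓝 ((Set.Ioc 0 c).indicator ψ u)) := by
  rcases le_or_gt u 0 with hu0 | hu0
  · simp [Set.indicator_of_notMem, hu0.not_gt, tendsto_const_nhds]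
  rcases huc.lt_or_gt with huc | huc
  · rw [Set.indicator_of_mem (show u ∈ Set.Ioc 0 c from ⟨hu0, huc.le⟩)]
    refine (hF ⟨hu0, huc⟩).congr' ?_
    filter_upwards [hx.eventually (eventually_gt_nhds huc)] with n hn
    rw [Set.indicator_of_mem (show u ∈ Set.Ioc 0 (x n) from ⟨hu0, hn.le⟩)]
  · rw [Set.indicator_of_notMem fun h => huc.not_ge h.2]
    refine tendsto_const_nhds.congr' ?_
    filter_upwards [hx.eventually (eventually_lt_nhds huc)] with n hn
    rw [Set.indicator_of_notMem fun h => hn.not_ge h.2]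

theorem tendsto_riemannSum {ι : Type*} {l : Filter ι} [l.IsCountablyGenerated]
    {φ : ι → ℕ → ℝ} {a : ι → ℝ} {b : ι → ℕ} {c C : ℝ} {ψ : ℝ → ℝ} (hc : 0 ≤ c)
    (ha : ∀ᶠ n in l, 0 < a n) (hb : Tendsto (fun n => (b n : ℝ) / a n) l (𝓝 c))
    (hφ_bdd : ∀ᶠ n in l, ∀ j ∈ Finset.Icc 1 (b n), |φ n j| ≤ C)
    (hφ : ∀ u ∈ Set.Ioo 0 c, Tendsto (fun n => φ n ⌈a n * u⌉₊) l (𝓝 (ψ u))) :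
    Tendsto (fun n => riemannSum (a n) (b n) (φ n)) l (𝓝 (∫ u in (0 : ℝ)..c, ψ u)) := by
  have hrepr : (fun n => riemannSum (a n) (b n) (φ n)) =ᶠ[l] fun n =>
      ∫ u, (Set.Ioc 0 ((b n : ℝ) / a n)).indicator (fun u => φ n ⌈a n * u⌉₊) u := by
    filter_upwards [ha] with n hn
    rw [riemannSum_eq_integral _ hn, intervalIntegral.integral_of_le (by positivity),
      integral_indicator measurableSet_Ioc]
  rw [intervalIntegral.integral_of_le hc, ← integral_indicator measurableSet_Ioc]
  refine (tendsto_integral_filter_of_dominated_convergence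
    ((Set.Ioc 0 (c + 1)).indicator fun _ => |C|) ?_ ?_ ?_ ?_).congr' hrepr.symm
  · exact Eventually.of_forall fun n => ((measurable_from_nat.comp
      (Nat.measurable_ceil.comp (measurable_const_mul _))).indicator
        measurableSet_Ioc).aestronglyMeasurable
  · filter_upwards [ha, hφ_bdd, hb.eventually (eventually_le_nhds (lt_add_one c))]
      with n hn hbdd hbc
    refine ae_of_all _ fun u => ?_
    by_cases hu : u ∈ Set.Ioc 0 ((b n : ℝ) / a n)
    · have hu' : u ∈ Set.Ioc 0 (c + 1) := ⟨hu.1, hu.2.trans hbc⟩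
      rw [Set.indicator_of_mem hu, Set.indicator_of_mem hu', Real.norm_eq_abs]
      refine (hbdd _ (Finset.mem_Icc.2 ⟨Nat.ceil_pos.2 (mul_pos hn hu.1), ?_⟩)).trans
        (le_abs_self C)
      exact Nat.ceil_le.2 ((le_div_iff₀' hn).1 hu.2)
    · rw [Set.indicator_of_notMem hu, norm_zero]
      exact Set.indicator_nonneg (fun _ _ => abs_nonneg C) u
  · exact (integrable_indicator_iff measurableSet_Ioc).2
      (integrableOn_const measure_Ioc_lt_top.ne)
  · filter_upwards [Measure.ae_ne volume c] with u hu
    exact tendsto_indicator_Ioc_of_tendsto hb hu (hφ u)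

lemma abs_riemannSum_le {a C : ℝ} {b : ℕ} {φ : ℕ → ℝ} (ha : 0 < a)
    (hφ : ∀ j ∈ Finset.Icc 1 b, |φ j| ≤ C) : |riemannSum a b φ| ≤ b / a * C := by
  rw [riemannSum, abs_mul, abs_inv, abs_of_pos ha, div_mul_eq_mul_div, inv_mul_eq_div]
  gcongr
  calc |∑ j ∈ Finset.Icc 1 b, φ j| ≤ ∑ j ∈ Finset.Icc 1 b, |φ j| := Finset.abs_sum_le_sum_abs _ _
    _ ≤ b * C := by simpa using Finset.sum_le_card_nsmul _ _ C hφ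

lemma exists_eventually_abs_comp_sub_div_le {ι : Type*} {l : Filter ι} {g : ℝ → ℝ}
    (hg : Continuous g) {h : ι → ℝ} (hh : Tendsto h l atTop) {b : ι → ℕ} {c q : ℝ}
    (hq : 0 ≤ q) (hb : ∀ᶠ n in l, (b n : ℝ) / h n ≤ c) :
    ∃ C, 0 ≤ C ∧ ∀ᶠ n in l, ∀ j ≤ b n, |g ((j - q) / h n)| ≤ C := by
  obtain ⟨C, hC⟩ := (isCompact_Icc (a := -q) (b := c)).exists_bound_of_continuousOn
    hg.continuousOn
  refine ⟨max C 0, le_max_right _ _, ?_⟩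
  filter_upwards [hh.eventually_ge_atTop 1, hb] with n hn hbn j hj
  have hpos : 0 < h n := by linarith
  have hjb : (j : ℝ) ≤ b n := by exact_mod_cast hj
  refine (hC _ ⟨?_, ?_⟩).trans (le_max_left _ _)
  · rw [le_div_iff₀ hpos]
    nlinarith [j.cast_nonneg (α := ℝ)]
  · rw [div_le_iff₀ hpos] at hbn ⊢
    linarith

theorem tendsto_riemannSum_comp_sub_div {ι : Type*} {l : Filter ι} [l.IsCountablyGenerated]
    {g : ℝ → ℝ} (hg : Continuous g) {h : ι → ℝ} (hh : Tendsto h l atTop) {b : ι → ℕ}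
    {c q : ℝ} (hc : 0 ≤ c) (hq : 0 ≤ q) (hb : Tendsto (fun n => (b n : ℝ) / h n) l (𝓝 c)) :
    Tendsto (fun n => riemannSum (h n) (b n) fun j => g ((j - q) / h n)) l
      (𝓝 (∫ u in (0 : ℝ)..c, g u)) := by
  obtain ⟨C, -, hC⟩ := exists_eventually_abs_comp_sub_div_le hg hh hq
    (hb.eventually (eventually_le_nhds (lt_add_one c)))
  refine tendsto_riemannSum hc (hh.eventually_gt_atTop 0) hb
    (hC.mono fun n hn j hj => hn j (Finset.mem_Icc.1 hj).2) fun u hu => ?_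
  have hu' : Tendsto (fun n => ((⌈h n * u⌉₊ : ℝ) - q) / h n) l (𝓝 u) := by
    have := ((tendsto_nat_ceil_mul_div_atTop hu.1.le).comp hh).sub
      (tendsto_const_nhds (x := q).div_atTop hh)
    simpa [sub_div, mul_comm] using this
  exact (hg.tendsto u).comp hu'

lemma Filter.Tendsto.div_of_div_natCast {x h : ℕ → ℝ} {r ζ : ℝ}
    (hx : Tendsto (fun N => x N / N) atTop (𝓝 r))
    (hh : Tendsto (fun N : ℕ => (N : ℝ) / h N) atTop (𝓝 ζ)) :
    Tendsto (fun N => x N / h N) atTop (𝓝 (r * ζ)) := by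
  refine (hx.mul hh).congr' ?_
  filter_upwards [eventually_ne_atTop 0] with N hN
  field_simp

lemma tendsto_natCeil_natCast_mul_div {r : ℝ} (hr : 0 ≤ r) :
    Tendsto (fun N : ℕ => (⌈(N : ℝ) * r⌉₊ : ℝ) / N) atTop (𝓝 r) := by
  simpa only [Function.comp_def, mul_comm] using
    (tendsto_nat_ceil_mul_div_atTop hr).comp tendsto_natCast_atTop_atTop

lemma tendsto_natFloor_natCast_mul_div {r : ℝ} (hr : 0 ≤ r) :
    Tendsto (fun N : ℕ => (⌊(N : ℝ) * r⌋₊ : ℝ) / N) atTop (𝓝 r) := by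
  simpa only [Function.comp_def, mul_comm] using
    (tendsto_nat_floor_mul_div_atTop hr).comp tendsto_natCast_atTop_atTop

lemma exists_eventually_abs_mul_riemannSum_le {ι : Type*} {l : Filter ι} {K m : ℝ → ℝ}
    (hK : Continuous K) (hm : Continuous m) {h : ι → ℝ} (hh : Tendsto h l atTop) {b : ι → ℕ}
    {c q : ℝ} (hq : 0 ≤ q) (hb : ∀ᶠ n in l, (b n : ℝ) / h n ≤ c) :
    ∃ C, ∀ᶠ n in l, ∀ i ∈ Finset.Icc 1 (b n),
      |K (((i : ℝ) - b n) / h n) * riemannSum (h n) (i - 1) fun j => m ((j - q) / h n)| ≤ C := by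
  obtain ⟨Cm, hCm0, hCm⟩ := exists_eventually_abs_comp_sub_div_le hm hh hq hb
  obtain ⟨CK, hCK⟩ := (isCompact_Icc (a := -c) (b := 0)).exists_bound_of_continuousOn
    hK.continuousOn
  refine ⟨CK * (c * Cm), ?_⟩
  filter_upwards [hCm, hh.eventually_gt_atTop 0, hb] with n hmn hhn hbn i hi
  obtain ⟨-, hi⟩ := Finset.mem_Icc.1 hi
  have hib : ((i - 1 : ℕ) : ℝ) ≤ b n := by exact_mod_cast i.sub_le 1 |>.trans hi
  have hKi : |K (((i : ℝ) - b n) / h n)| ≤ CK := by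
    refine hCK _ ⟨?_, div_nonpos_of_nonpos_of_nonneg (by simpa using hi) hhn.le⟩
    rw [le_div_iff₀ hhn]
    rw [div_le_iff₀ hhn] at hbn
    nlinarith [i.cast_nonneg (α := ℝ)]
  have hmi : |riemannSum (h n) (i - 1) fun j => m ((j - q) / h n)| ≤ c * Cm := by
    refine (abs_riemannSum_le hhn fun j hj => hmn j ?_).trans ?_
    · exact (Finset.mem_Icc.1 hj).2.trans (i.sub_le 1 |>.trans hi)
    · gcongr
      exact (div_le_div_of_nonneg_right hib hhn.le).trans hbn
  rw [abs_mul]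
  exact mul_le_mul hKi hmi (abs_nonneg _) ((abs_nonneg _).trans hKi)

theorem tendsto_riemannSum_kernel_mul_riemannSum {K m : ℝ → ℝ} (hK : Continuous K)
    (hm : Continuous m) {h : ℕ → ℝ} (hh : Tendsto h atTop atTop) {ζ : ℝ} (hζ : 0 ≤ ζ)
    (hlim : Tendsto (fun N : ℕ => (N : ℝ) / h N) atTop (𝓝 ζ)) {q s : ℝ} (hq : 0 ≤ q)
    (hs : 0 ≤ s) :
    Tendsto (fun N : ℕ => riemannSum N ⌊(N : ℝ) * s⌋₊ fun i =>
        K (((i : ℝ) - ⌊(N : ℝ) * s⌋₊) / h N) *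
          riemannSum (h N) (i - 1) fun j => m ((j - q) / h N))
      atTop (𝓝 (∫ r in (0 : ℝ)..s, K (ζ * (r - s)) * ∫ t in (0 : ℝ)..ζ * r, m t)) := by
  have hfloor := tendsto_natFloor_natCast_mul_div hs
  obtain ⟨C, hC⟩ := exists_eventually_abs_mul_riemannSum_le hK hm hh hq
    ((hfloor.div_of_div_natCast hlim).eventually (eventually_le_nhds (lt_add_one (s * ζ))))
  refine tendsto_riemannSum hs (eventually_gt_atTop 0 |>.mono fun N hN => Nat.cast_pos.2 hN)
    hfloor hC fun r hr => ?_
  have hceil := tendsto_natCeil_natCast_mul_div hr.1.le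
  have hK_arg : Tendsto (fun N : ℕ => ((⌈(N : ℝ) * r⌉₊ : ℝ) - ⌊(N : ℝ) * s⌋₊) / h N) atTop
      (𝓝 (ζ * (r - s))) := by
    rw [mul_comm]
    exact (hceil.sub hfloor).congr (fun N => by rw [sub_div]) |>.div_of_div_natCast hlim
  have hm_arg : Tendsto (fun N : ℕ => ((⌈(N : ℝ) * r⌉₊ - 1 : ℕ) : ℝ) / h N) atTop
      (𝓝 (ζ * r)) := by
    have := (hceil.div_of_div_natCast hlim).sub (tendsto_const_nhds (x := (1 : ℝ)).div_atTop hh)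
    rw [sub_zero, mul_comm] at this
    refine this.congr' ?_
    filter_upwards [eventually_gt_atTop 0] with N hN
    rw [Nat.cast_pred (Nat.ceil_pos.2 (mul_pos (Nat.cast_pos.2 hN) hr.1)), sub_div]
  exact ((hK.tendsto _).comp hK_arg).mul
    (tendsto_riemannSum_comp_sub_div hm hh (mul_nonneg hζ hr.1.le) hq hm_arg)

lemma continuous_of_abs_sub_le_mul {f : ℝ → ℝ} {L : ℝ}
    (hf : ∀ x y, |f x - f y| ≤ L * |x - y|) : Continuous f := by
  refine (LipschitzWith.of_dist_le_mul (K := L.toNNReal) fun x y => ?_).continuous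
  simp only [Real.dist_eq]
  exact (hf x y).trans (by gcongr; exact L.le_coe_toNNReal)

theorem drift_term_convergence_CP1_general
    (K : ℝ → ℝ) (L : ℝ)
    (hK_lip : ∀ z₁ z₂ : ℝ, |K z₁ - K z₂| ≤ L * |z₁ - z₂|)
    (h : ℕ → ℝ)
    (ζ : ℝ) (hζ : 1 ≤ ζ)
    (hlim : Tendsto (fun N : ℕ => (N : ℝ) / h N) atTop (nhds ζ))
    (m₀ : ℝ → ℝ) (hm₀_cont : Continuous m₀)
    (q : ℕ)
    (s : ℝ) (hs : s ∈ Set.Ioc (0 : ℝ) 1) :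
    Tendsto
      (fun N : ℕ =>
        Real.sqrt (h N) / (N : ℝ) ^ ((3 : ℝ) / 2) *
          ∑ i ∈ Finset.Icc 1 ⌊(N : ℝ) * s⌋₊,
            (1 / h N) * K (((i : ℝ) - (⌊(N : ℝ) * s⌋₊ : ℝ)) / h N) *
              ∑ j ∈ Finset.Icc 1 (i - 1), m₀ (((j : ℝ) - (q : ℝ)) / h N))
      atTop
      (nhds ((Real.sqrt ζ)⁻¹ *
        ∫ r in (0 : ℝ)..s, K (ζ * (r - s)) * ∫ t in (0 : ℝ)..(ζ * r), m₀ t)) := by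
  have hζ0 : 0 < ζ := one_pos.trans_le hζ
  have hinv : Tendsto (fun N : ℕ => h N / N) atTop (𝓝 ζ⁻¹) := by
    simpa only [inv_div] using hlim.inv₀ hζ0.ne'
  have hh : Tendsto h atTop atTop := by
    refine (tendsto_natCast_atTop_atTop.atTop_mul_pos (inv_pos.2 hζ0) hinv).congr' ?_
    filter_upwards [eventually_ne_atTop 0] with N hN
    field_simp
  have hsqrt : Tendsto (fun N : ℕ => √(h N / N)) atTop (𝓝 (√ζ)⁻¹) := by
    simpa only [Function.comp_def, Real.sqrt_inv] using (Real.continuous_sqrt.tendsto _).comp hinv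
  refine (hsqrt.mul (tendsto_riemannSum_kernel_mul_riemannSum
    (continuous_of_abs_sub_le_mul hK_lip) hm₀_cont hh hζ0.le hlim q.cast_nonneg hs.1.le)).congr' ?_
  filter_upwards [eventually_gt_atTop 0] with N hN
  have hN' : (0 : ℝ) < N := Nat.cast_pos.2 hN
  rw [Real.sqrt_div' _ hN'.le, show (3 : ℝ) / 2 = 1 / 2 + 1 by norm_num, Real.rpow_add hN',
    Real.rpow_one, ← Real.sqrt_eq_rpow, riemannSum, Finset.mul_sum, Finset.mul_sum, Finset.mul_sum]
  refine Finset.sum_congr rfl fun i _ => ?_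
  rw [riemannSum]
  ring

/-- Under assumption (K), a bandwidth sequence with `N/h_N → ζ ∈ [1,∞)`,
a generic alternative `m₀`, and a fixed change point `q ∈ ℕ` (model CP1), for every
fixed `s ∈ (0,1]`,
`h_N^{1/2} N^{−3/2} ∑_{i=1}^{⌊Ns⌋} (1/h_N) K((i−⌊Ns⌋)/h_N) ∑_{j=1}^{i−1} m₀((j−q)/h_N)
  → ζ^{−1/2} ∫_0^s K(ζ(r−s)) (∫_0^{ζr} m₀(t) dt) dr`. -/
theorem drift_term_convergence_CP1
    (K : ℝ → ℝ) (L : ℝ)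
    (hK_lip : ∀ z₁ z₂ : ℝ, |K z₁ - K z₂| ≤ L * |z₁ - z₂|)
    (hK_nonneg : ∀ z, 0 ≤ K z)
    (hK_int : Integrable K)
    (hK_dens : ∫ z, K z = 1)
    (hK_mean_int : Integrable (fun z => z * K z))
    (hK_mean : ∫ z, z * K z = 0)
    (hK_var : Integrable (fun z => z ^ 2 * K z))
    (h : ℕ → ℝ) (hpos : ∀ N, 0 < h N)
    (ζ : ℝ) (hζ : 1 ≤ ζ)
    (hlim : Tendsto (fun N : ℕ => (N : ℝ) / h N) atTop (nhds ζ))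
    (m₀ : ℝ → ℝ) (hm₀_cont : Continuous m₀)
    (hm₀_zero : ∀ t : ℝ, t ≤ 0 → m₀ t = 0)
    (hm₀_nonneg : ∀ t : ℝ, 0 < t → 0 ≤ m₀ t)
    (q : ℕ)
    (s : ℝ) (hs : s ∈ Set.Ioc (0 : ℝ) 1) :
    Tendsto
      (fun N : ℕ =>
        Real.sqrt (h N) / (N : ℝ) ^ ((3 : ℝ) / 2) *
          ∑ i ∈ Finset.Icc 1 ⌊(N : ℝ) * s⌋₊,
            (1 / h N) * K (((i : ℝ) - (⌊(N : ℝ) * s⌋₊ : ℝ)) / h N) *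
              ∑ j ∈ Finset.Icc 1 (i - 1), m₀ (((j : ℝ) - (q : ℝ)) / h N))
      atTop
      (nhds ((Real.sqrt ζ)⁻¹ *
        ∫ r in (0 : ℝ)..s, K (ζ * (r - s)) * ∫ t in (0 : ℝ)..(ζ * r), m₀ t)) :=
  drift_term_convergence_CP1_general K L hK_lip h ζ hζ hlim m₀ hm₀_cont q s hs
end

section
/- Let K : ℝ → ℝ satisfy assumption (K), let (h_N) be a bandwidth sequence with N/h_N → ζ ∈ [1,∞), let m₀ be a generic alternative, and let the change point be q_N = ⌊Nϑ⌋ for a fixed ϑ ∈ (0,1) (change-point model CP2). Then for every fixed s ∈ (0,1], h_N^{1/2} N^{−3/2} ∑_{i=1}^{⌊Ns⌋} (1/h_N) K((i − ⌊Ns⌋)/h_N) ∑_{j=1}^{i−1} m₀((j − ⌊Nϑ⌋)/h_N) → ζ^{−1/2} ∫_0^s K(ζ(r−s)) (∫_0^{ζ r} m₀(t − ζϑ) dt) dr as N → ∞. -/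
/-!
Both sums are Riemann sums. For any array `a N i`, `N⁻¹ ∑_{i ≤ n_N} a N i` is the integral over
`(0, n_N / N]` of the step function `u ↦ a N ⌈N u⌉`; if `n_N / N → s`, the `a N i` are uniformly
bounded and `a N ⌈N u⌉ → f u` for `0 < u < s`, dominated convergence gives `∫_0^s f` in the limit.
Since `N / h_N → ζ`, every argument `(x - y) / h_N` with `x, y ∈ [0, N]` eventually lies in a
fixed compact interval, which bounds `K` and `m₀` there, and `(⌈N u⌉ - ⌊N c⌋) / h_N → ζ (u - c)`.
Applied first to the inner sum this gives
`h_N⁻¹ ∑_{j < ⌈N r⌉} m₀ ((j - ⌊N ϑ⌋) / h_N) → ζ ∫_0^r m₀ (ζ (u - ϑ)) du = ∫_0^{ζ r} m₀ (t - ζ ϑ) dt`,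
then to the outer sum, whose prefactor `√h_N / N^{3/2} = √(h_N / N) / N` supplies `ζ^{-1/2}`.
-/

open MeasureTheory Filter Topology Set
open scoped Interval

lemma intervalIntegral_natCeil_eq_sum (a : ℕ → ℝ) (n : ℕ) :
    ∫ x in (0 : ℝ)..n, a ⌈x⌉₊ = ∑ i ∈ Finset.Icc 1 n, a i := by
  have hceil (k : ℕ) :
      EqOn (fun x : ℝ => a ⌈x⌉₊) (fun _ => a (k + 1)) (Ι (k : ℝ) (k + 1 : ℕ)) := by
    intro x hx
    rw [uIoc_of_le (by simp)] at hx
    push_cast at hx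
    simp only [(Nat.ceil_eq_iff k.succ_ne_zero).2 (by push_cast; exact ⟨by linarith [hx.1], hx.2⟩)]
  rw [← Nat.cast_zero, ← intervalIntegral.sum_integral_adjacent_intervals fun k _ =>
      (intervalIntegrable_congr (hceil k)).2 intervalIntegrable_const,
    ← Finset.Ico_add_one_right_eq_Icc, ← Finset.sum_Ico_add' a 0 n 1, ← Finset.range_eq_Ico]
  refine Finset.sum_congr rfl fun k _ => ?_
  rw [intervalIntegral.integral_congr_ae (ae_of_all _ (hceil k)), intervalIntegral.integral_const]
  simp

lemma inv_mul_sum_Icc_eq_intervalIntegral (a : ℕ → ℝ) (n : ℕ) {N : ℝ} (hN : N ≠ 0) :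
    N⁻¹ * ∑ i ∈ Finset.Icc 1 n, a i = ∫ u in (0 : ℝ)..n / N, a ⌈N * u⌉₊ := by
  rw [intervalIntegral.integral_comp_mul_left (fun x => a ⌈x⌉₊) hN, mul_zero,
    mul_div_cancel₀ _ hN, intervalIntegral_natCeil_eq_sum, smul_eq_mul]

lemma tendsto_indicator_Ioc_of_tendsto_s2 {ι : Type*} {l : Filter ι} {t : ι → ℝ} {s u : ℝ}
    {φ : ι → ℝ → ℝ} {f : ℝ → ℝ} (ht : Tendsto t l (𝓝 s)) (hus : u ≠ s)
    (hconv : u ∈ Ioo 0 s → Tendsto (fun i => φ i u) l (𝓝 (f u))) :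
    Tendsto (fun i => (Ioc 0 (t i)).indicator (φ i) u) l (𝓝 ((Ioc 0 s).indicator f u)) := by
  by_cases hu : u ∈ Ioo 0 s
  · rw [indicator_of_mem (Ioo_subset_Ioc_self hu)]
    refine (hconv hu).congr' ?_
    filter_upwards [ht.eventually (eventually_gt_nhds hu.2)] with i hi
    exact (indicator_of_mem (show u ∈ Ioc 0 (t i) from ⟨hu.1, hi.le⟩) _).symm
  · rw [indicator_of_notMem fun h => hu ⟨h.1, h.2.lt_of_ne hus⟩]
    refine tendsto_const_nhds.congr' ?_
    rcases le_or_gt u 0 with hu0 | hu0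
    · exact Eventually.of_forall fun i => (indicator_of_notMem (fun h => hu0.not_gt h.1) _).symm
    · have hsu : s < u := lt_of_le_of_ne (not_lt.1 fun h => hu ⟨hu0, h⟩) (Ne.symm hus)
      filter_upwards [ht.eventually (eventually_lt_nhds hsu)] with i hi
      exact (indicator_of_notMem (fun h => (h.2.trans_lt hi).false) _).symm

theorem tendsto_inv_mul_sum_Icc {a : ℕ → ℕ → ℝ} {f : ℝ → ℝ} {n : ℕ → ℕ} {s C : ℝ}
    (hn : Tendsto (fun N : ℕ => (n N : ℝ) / N) atTop (𝓝 s))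
    (hbound : ∀ᶠ N in atTop, ∀ i ∈ Finset.Icc 1 (n N), |a N i| ≤ C)
    (hconv : ∀ u ∈ Ioo 0 s, Tendsto (fun N : ℕ => a N ⌈(N : ℝ) * u⌉₊) atTop (𝓝 (f u))) :
    Tendsto (fun N : ℕ => (N : ℝ)⁻¹ * ∑ i ∈ Finset.Icc 1 (n N), a N i) atTop
      (𝓝 (∫ u in Ioc 0 s, f u)) := by
  set F : ℕ → ℝ → ℝ := fun N =>
    (Ioc 0 ((n N : ℝ) / N)).indicator fun u => a N ⌈(N : ℝ) * u⌉₊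
  have hsum : ∀ᶠ N : ℕ in atTop,
      ∫ u, F N u = (N : ℝ)⁻¹ * ∑ i ∈ Finset.Icc 1 (n N), a N i := by
    filter_upwards [eventually_gt_atTop 0] with N hN
    rw [integral_indicator measurableSet_Ioc, ← intervalIntegral.integral_of_le (by positivity),
      inv_mul_sum_Icc_eq_intervalIntegral _ _ (by positivity)]
  rw [← integral_indicator measurableSet_Ioc]
  refine (tendsto_integral_filter_of_dominated_convergence
    ((Ioc 0 (s + 1)).indicator fun _ => |C|) ?_ ?_ ?_ ?_).congr' hsum
  · exact Eventually.of_forall fun N => ((measurable_from_nat.comp (Nat.measurable_ceil.comp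
      (measurable_const_mul _))).indicator measurableSet_Ioc).aestronglyMeasurable
  · filter_upwards [hbound, hn.eventually (eventually_lt_nhds (lt_add_one s)),
      eventually_gt_atTop 0] with N hC hs hN
    refine ae_of_all _ fun u => ?_
    simp only [F]
    by_cases hu : u ∈ Ioc 0 ((n N : ℝ) / N)
    · have hN' : (0 : ℝ) < N := by exact_mod_cast hN
      have hi : ⌈(N : ℝ) * u⌉₊ ∈ Finset.Icc 1 (n N) := Finset.mem_Icc.2
        ⟨Nat.one_le_ceil_iff.2 (mul_pos hN' hu.1), Nat.ceil_le.2 ((le_div_iff₀' hN').1 hu.2)⟩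
      rw [indicator_of_mem hu,
        indicator_of_mem (show u ∈ Ioc 0 (s + 1) from ⟨hu.1, hu.2.trans hs.le⟩)]
      exact (hC _ hi).trans (le_abs_self C)
    · rw [indicator_of_notMem hu, norm_zero]
      exact indicator_nonneg (fun _ _ => abs_nonneg C) u
  · exact (integrableOn_const (by simp)).integrable_indicator measurableSet_Ioc
  · filter_upwards [volume.ae_ne s] with u hus
    exact tendsto_indicator_Ioc_of_tendsto_s2 hn hus (hconv u)

lemma tendsto_natFloor_mul_div {c : ℝ} (hc : 0 ≤ c) :
    Tendsto (fun N : ℕ => (⌊(N : ℝ) * c⌋₊ : ℝ) / N) atTop (𝓝 c) := by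
  simpa only [Function.comp_def, mul_comm c] using
    (tendsto_nat_floor_mul_div_atTop hc).comp tendsto_natCast_atTop_atTop

lemma tendsto_natCeil_mul_div {c : ℝ} (hc : 0 ≤ c) :
    Tendsto (fun N : ℕ => (⌈(N : ℝ) * c⌉₊ : ℝ) / N) atTop (𝓝 c) := by
  simpa only [Function.comp_def, mul_comm c] using
    (tendsto_nat_ceil_mul_div_atTop hc).comp tendsto_natCast_atTop_atTop

lemma tendsto_natCeil_mul_sub_one_div {c : ℝ} (hc : 0 < c) :
    Tendsto (fun N : ℕ => ((⌈(N : ℝ) * c⌉₊ - 1 : ℕ) : ℝ) / N) atTop (𝓝 c) := by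
  have h := (tendsto_natCeil_mul_div hc.le).sub tendsto_one_div_atTop_nhds_zero_nat
  rw [sub_zero] at h
  refine h.congr' ?_
  filter_upwards [eventually_gt_atTop 0] with N hN
  rw [Nat.cast_pred (Nat.ceil_pos.2 (by positivity)), sub_div]

lemma natCast_floor_mul_le {c : ℝ} (hc : c ∈ Icc (0 : ℝ) 1) (N : ℕ) :
    (⌊(N : ℝ) * c⌋₊ : ℝ) ≤ N :=
  (Nat.floor_le (by positivity [hc.1])).trans (mul_le_of_le_one_right N.cast_nonneg hc.2)

lemma natCeil_mul_le {c : ℝ} (hc : c ≤ 1) (N : ℕ) : ⌈(N : ℝ) * c⌉₊ ≤ N :=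
  Nat.ceil_le.2 (mul_le_of_le_one_right N.cast_nonneg hc)

lemma mul_setIntegral_Ioc_comp_mul_sub (g : ℝ → ℝ) (ζ c : ℝ) {r : ℝ} (hr : 0 ≤ r) :
    ζ * ∫ u in Ioc 0 r, g (ζ * (u - c)) = ∫ t in (0 : ℝ)..ζ * r, g (t - ζ * c) := by
  have hg : (fun u => g (ζ * (u - c))) = fun u => (fun t => g (t - ζ * c)) (ζ * u) := by
    ext u
    ring_nf
  rw [← intervalIntegral.integral_of_le hr, hg, ← smul_eq_mul,
    intervalIntegral.smul_integral_comp_mul_left (fun t => g (t - ζ * c)) ζ, mul_zero]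

lemma sqrt_div_rpow_three_halves (x : ℝ) {y : ℝ} (hy : 0 < y) :
    √x / y ^ ((3 : ℝ) / 2) = √(x / y) * y⁻¹ := by
  rw [Real.sqrt_div' x hy.le, show (3 : ℝ) / 2 = 1 + 1 / 2 by norm_num, Real.rpow_add hy,
    Real.rpow_one, ← Real.sqrt_eq_rpow]
  field_simp

section Bandwidth

variable {h : ℕ → ℝ} {ζ : ℝ}

lemma tendsto_sub_div_of_tendsto_div (hlim : Tendsto (fun N : ℕ => (N : ℝ) / h N) atTop (𝓝 ζ))
    {x y : ℕ → ℝ} {u c : ℝ} (hx : Tendsto (fun N : ℕ => x N / N) atTop (𝓝 u))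
    (hy : Tendsto (fun N : ℕ => y N / N) atTop (𝓝 c)) :
    Tendsto (fun N : ℕ => (x N - y N) / h N) atTop (𝓝 (ζ * (u - c))) := by
  rw [mul_comm]
  refine ((hx.sub hy).mul hlim).congr' ?_
  filter_upwards [eventually_ne_atTop 0] with N hN
  rw [← sub_div, div_mul_div_cancel₀ (Nat.cast_ne_zero.2 hN)]

lemma eventually_natCast_div_lt (hlim : Tendsto (fun N : ℕ => (N : ℝ) / h N) atTop (𝓝 ζ)) :
    ∀ᶠ N : ℕ in atTop, (N : ℝ) / h N < |ζ| + 1 :=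
  hlim.eventually (eventually_lt_nhds ((le_abs_self ζ).trans_lt (lt_add_one _)))

variable (hpos : ∀ N, 0 < h N) (hlim : Tendsto (fun N : ℕ => (N : ℝ) / h N) atTop (𝓝 ζ))
include hpos hlim

lemma exists_abs_comp_sub_div_le {g : ℝ → ℝ} (hg : Continuous g) :
    ∃ C, 0 ≤ C ∧ ∀ᶠ N : ℕ in atTop,
      ∀ x ∈ Icc (0 : ℝ) N, ∀ y ∈ Icc (0 : ℝ) N, |g ((x - y) / h N)| ≤ C := by
  obtain ⟨C, hC⟩ := (isCompact_Icc (a := -(|ζ| + 1)) (b := |ζ| + 1)).exists_bound_of_continuousOn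
    hg.continuousOn
  refine ⟨C, (norm_nonneg _).trans (hC 0 ⟨by linarith [abs_nonneg ζ], by positivity⟩), ?_⟩
  filter_upwards [eventually_natCast_div_lt hlim] with N hN x hx y hy
  refine hC _ (abs_le.1 ?_)
  rw [abs_div, abs_of_pos (hpos N)]
  refine le_trans (div_le_div_of_nonneg_right ?_ (hpos N).le) hN.le
  exact abs_sub_le_iff.2 ⟨by linarith [hx.2, hy.1], by linarith [hx.1, hy.2]⟩

lemma exists_abs_inv_mul_sum_le {g : ℝ → ℝ} (hg : Continuous g) :
    ∃ C, ∀ᶠ N : ℕ in atTop, ∀ n ≤ N, ∀ y ∈ Icc (0 : ℝ) N,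
      |1 / h N * ∑ j ∈ Finset.Icc 1 n, g ((j - y) / h N)| ≤ C := by
  obtain ⟨C, hC0, hC⟩ := exists_abs_comp_sub_div_le hpos hlim hg
  refine ⟨(|ζ| + 1) * C, ?_⟩
  filter_upwards [hC, eventually_natCast_div_lt hlim] with N hCN hN n hn y hy
  have hterm (j : ℕ) (hj : j ∈ Finset.Icc 1 n) : |g ((j - y) / h N)| ≤ C :=
    hCN j ⟨j.cast_nonneg, by exact_mod_cast (Finset.mem_Icc.1 hj).2.trans hn⟩ y hy
  have hsum : |∑ j ∈ Finset.Icc 1 n, g ((j - y) / h N)| ≤ N * C := by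
    refine (Finset.abs_sum_le_sum_abs _ _).trans <|
      (Finset.sum_le_card_nsmul _ _ C hterm).trans ?_
    rw [Nat.card_Icc, Nat.add_sub_cancel, nsmul_eq_mul]
    gcongr
  have hh : 0 < 1 / h N := one_div_pos.2 (hpos N)
  calc |1 / h N * ∑ j ∈ Finset.Icc 1 n, g ((j - y) / h N)|
      = 1 / h N * |∑ j ∈ Finset.Icc 1 n, g ((j - y) / h N)| := by rw [abs_mul, abs_of_pos hh]
    _ ≤ 1 / h N * (N * C) := by gcongr
    _ = N / h N * C := by ring
    _ ≤ (|ζ| + 1) * C := by gcongr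

lemma tendsto_inv_mul_sum_Icc_ceil_sub_one {g : ℝ → ℝ} (hg : Continuous g) {c r : ℝ}
    (hc : c ∈ Icc (0 : ℝ) 1) (hr : r ∈ Ioc (0 : ℝ) 1) :
    Tendsto (fun N : ℕ => 1 / h N * ∑ j ∈ Finset.Icc 1 (⌈(N : ℝ) * r⌉₊ - 1),
        g ((j - ⌊(N : ℝ) * c⌋₊) / h N)) atTop
      (𝓝 (ζ * ∫ u in Ioc 0 r, g (ζ * (u - c)))) := by
  obtain ⟨C, -, hC⟩ := exists_abs_comp_sub_div_le hpos hlim hg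
  have hriemann := tendsto_inv_mul_sum_Icc (C := C)
    (a := fun N j => g ((j - ⌊(N : ℝ) * c⌋₊) / h N)) (f := fun u => g (ζ * (u - c)))
    (tendsto_natCeil_mul_sub_one_div hr.1) ?_ ?_
  · refine (hlim.mul hriemann).congr' ?_
    filter_upwards [eventually_gt_atTop 0] with N hN
    field_simp
  · filter_upwards [hC] with N hCN j hj
    have hjN : j ≤ N :=
      (Finset.mem_Icc.1 hj).2.trans ((Nat.sub_le _ _).trans (natCeil_mul_le hr.2 N))
    exact hCN j ⟨j.cast_nonneg, by exact_mod_cast hjN⟩ _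
      ⟨by positivity, natCast_floor_mul_le hc N⟩
  · exact fun u hu => (hg.tendsto _).comp (tendsto_sub_div_of_tendsto_div hlim
      (tendsto_natCeil_mul_div hu.1.le) (tendsto_natFloor_mul_div hc.1))

lemma tendsto_inv_mul_sum_kernel_mul_sum {K g : ℝ → ℝ} (hK : Continuous K) (hg : Continuous g)
    {c s : ℝ} (hc : c ∈ Icc (0 : ℝ) 1) (hs : s ∈ Ioc (0 : ℝ) 1) :
    Tendsto (fun N : ℕ => (N : ℝ)⁻¹ * ∑ i ∈ Finset.Icc 1 ⌊(N : ℝ) * s⌋₊,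
        1 / h N * K ((i - ⌊(N : ℝ) * s⌋₊) / h N) *
          ∑ j ∈ Finset.Icc 1 (i - 1), g ((j - ⌊(N : ℝ) * c⌋₊) / h N)) atTop
      (𝓝 (∫ r in Ioc 0 s, K (ζ * (r - s)) * (ζ * ∫ u in Ioc 0 r, g (ζ * (u - c))))) := by
  obtain ⟨B, hB0, hB⟩ := exists_abs_comp_sub_div_le hpos hlim hK
  obtain ⟨C, hC⟩ := exists_abs_inv_mul_sum_le hpos hlim hg
  have hsN (N : ℕ) : (⌊(N : ℝ) * s⌋₊ : ℝ) ≤ N := natCast_floor_mul_le ⟨hs.1.le, hs.2⟩ N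
  refine tendsto_inv_mul_sum_Icc (C := B * C) (tendsto_natFloor_mul_div hs.1.le) ?_
    fun r hr => ?_
  · filter_upwards [hB, hC] with N hBN hCN i hi
    have hiN : (i : ℝ) ≤ N := (Nat.cast_le.2 (Finset.mem_Icc.1 hi).2).trans (hsN N)
    rw [mul_comm (1 / h N), mul_assoc, abs_mul]
    exact mul_le_mul (hBN i ⟨i.cast_nonneg, hiN⟩ _ ⟨by positivity, hsN N⟩)
      (hCN (i - 1) (by exact_mod_cast (Nat.sub_le _ _).trans (Nat.cast_le.1 hiN)) _
        ⟨by positivity, natCast_floor_mul_le hc N⟩) (abs_nonneg _) hB0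
  · have hKconv := (hK.tendsto _).comp (tendsto_sub_div_of_tendsto_div hlim
      (tendsto_natCeil_mul_div hr.1.le) (tendsto_natFloor_mul_div hs.1.le))
    refine (hKconv.mul (tendsto_inv_mul_sum_Icc_ceil_sub_one hpos hlim hg hc
      ⟨hr.1, hr.2.le.trans hs.2⟩)).congr fun N => ?_
    simp only [Function.comp_apply]
    ring

end Bandwidth

theorem drift_term_convergence_CP2_general
    (K : ℝ → ℝ) (L : ℝ)
    (hK_lip : ∀ z₁ z₂ : ℝ, |K z₁ - K z₂| ≤ L * |z₁ - z₂|)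
    (h : ℕ → ℝ) (hpos : ∀ N, 0 < h N)
    (ζ : ℝ) (hζ : 1 ≤ ζ)
    (hlim : Tendsto (fun N : ℕ => (N : ℝ) / h N) atTop (nhds ζ))
    (m₀ : ℝ → ℝ) (hm₀_cont : Continuous m₀)
    (ϑ : ℝ) (hϑ : ϑ ∈ Set.Ioo (0 : ℝ) 1)
    (s : ℝ) (hs : s ∈ Set.Ioc (0 : ℝ) 1) :
    Tendsto
      (fun N : ℕ =>
        Real.sqrt (h N) / (N : ℝ) ^ ((3 : ℝ) / 2) *
          ∑ i ∈ Finset.Icc 1 ⌊(N : ℝ) * s⌋₊,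
            (1 / h N) * K (((i : ℝ) - (⌊(N : ℝ) * s⌋₊ : ℝ)) / h N) *
              ∑ j ∈ Finset.Icc 1 (i - 1),
                m₀ (((j : ℝ) - (⌊(N : ℝ) * ϑ⌋₊ : ℝ)) / h N))
      atTop
      (nhds ((Real.sqrt ζ)⁻¹ *
        ∫ r in (0 : ℝ)..s, K (ζ * (r - s)) * ∫ t in (0 : ℝ)..(ζ * r), m₀ (t - ζ * ϑ))) := by
  have hK : Continuous K :=
    (LipschitzWith.of_dist_le' fun x y => by simpa only [Real.dist_eq] using hK_lip x y).continuous
  have hprefactor : Tendsto (fun N : ℕ => √(h N / N)) atTop (𝓝 (√ζ)⁻¹) := by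
    rw [← Real.sqrt_inv]
    refine (Real.continuous_sqrt.tendsto _).comp
      ((hlim.inv₀ (zero_lt_one.trans_le hζ).ne').congr fun N => inv_div _ _)
  have hsums := tendsto_inv_mul_sum_kernel_mul_sum hpos hlim hK hm₀_cont ⟨hϑ.1.le, hϑ.2.le⟩ hs
  have hintegral :
      ∫ r in Ioc 0 s, K (ζ * (r - s)) * (ζ * ∫ u in Ioc 0 r, m₀ (ζ * (u - ϑ))) =
        ∫ r in (0 : ℝ)..s, K (ζ * (r - s)) * ∫ t in (0 : ℝ)..(ζ * r), m₀ (t - ζ * ϑ) := by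
    rw [intervalIntegral.integral_of_le hs.1.le]
    refine setIntegral_congr_fun measurableSet_Ioc fun r hr => ?_
    rw [mul_setIntegral_Ioc_comp_mul_sub m₀ ζ ϑ hr.1.le]
  rw [← hintegral]
  refine (hprefactor.mul hsums).congr' ?_
  filter_upwards [eventually_gt_atTop 0] with N hN
  rw [sqrt_div_rpow_three_halves _ (by positivity), mul_assoc]

/-- Under assumption (K), a bandwidth sequence with `N/h_N → ζ ∈ [1,∞)`,
a generic alternative `m₀`, and change point `q_N = ⌊Nϑ⌋` with `ϑ ∈ (0,1)` (model CP2),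
for every fixed `s ∈ (0,1]`,
`h_N^{1/2} N^{−3/2} ∑_{i=1}^{⌊Ns⌋} (1/h_N) K((i−⌊Ns⌋)/h_N) ∑_{j=1}^{i−1} m₀((j−⌊Nϑ⌋)/h_N)
  → ζ^{−1/2} ∫_0^s K(ζ(r−s)) (∫_0^{ζr} m₀(t − ζϑ) dt) dr`. -/
theorem drift_term_convergence_CP2
    (K : ℝ → ℝ) (L : ℝ)
    (hK_lip : ∀ z₁ z₂ : ℝ, |K z₁ - K z₂| ≤ L * |z₁ - z₂|)
    (hK_nonneg : ∀ z, 0 ≤ K z)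
    (hK_int : Integrable K)
    (hK_dens : ∫ z, K z = 1)
    (hK_mean_int : Integrable (fun z => z * K z))
    (hK_mean : ∫ z, z * K z = 0)
    (hK_var : Integrable (fun z => z ^ 2 * K z))
    (h : ℕ → ℝ) (hpos : ∀ N, 0 < h N)
    (ζ : ℝ) (hζ : 1 ≤ ζ)
    (hlim : Tendsto (fun N : ℕ => (N : ℝ) / h N) atTop (nhds ζ))
    (m₀ : ℝ → ℝ) (hm₀_cont : Continuous m₀)
    (hm₀_zero : ∀ t : ℝ, t ≤ 0 → m₀ t = 0)
    (hm₀_nonneg : ∀ t : ℝ, 0 < t → 0 ≤ m₀ t)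
    (ϑ : ℝ) (hϑ : ϑ ∈ Set.Ioo (0 : ℝ) 1)
    (s : ℝ) (hs : s ∈ Set.Ioc (0 : ℝ) 1) :
    Tendsto
      (fun N : ℕ =>
        Real.sqrt (h N) / (N : ℝ) ^ ((3 : ℝ) / 2) *
          ∑ i ∈ Finset.Icc 1 ⌊(N : ℝ) * s⌋₊,
            (1 / h N) * K (((i : ℝ) - (⌊(N : ℝ) * s⌋₊ : ℝ)) / h N) *
              ∑ j ∈ Finset.Icc 1 (i - 1),
                m₀ (((j : ℝ) - (⌊(N : ℝ) * ϑ⌋₊ : ℝ)) / h N))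
      atTop
      (nhds ((Real.sqrt ζ)⁻¹ *
        ∫ r in (0 : ℝ)..s, K (ζ * (r - s)) * ∫ t in (0 : ℝ)..(ζ * r), m₀ (t - ζ * ϑ))) :=
  drift_term_convergence_CP2_general K L hK_lip h hpos ζ hζ hlim m₀ hm₀_cont ϑ hϑ s hs
end

section
/- Let K : ℝ → ℝ satisfy assumption (K), let (h_N) be a bandwidth sequence with N/h_N → ζ ∈ [1,∞), let u_1, u_2, … be i.i.d. real random variables with E(u_1) = 0 and E(u_1²) = σ² ∈ (0,∞), set Y_i = ∑_{j=1}^i u_j, and fix a ∈ (0,1). Then sup_{s ∈ [a,1]} | h_N^{1/2} N^{−3/2} ∑_{i=1}^{⌊Ns⌋} (1/h_N) K((i − ⌊Ns⌋)/h_N) Y_i | → 0 in probability as N → ∞. -/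
/-! Since `K` is Lipschitz, `|K x| ≤ |K 0| + L |x|`, and the kernel is only evaluated at
`|x| ≤ N / h_N`, which stays bounded. So the supremum is dominated, uniformly in `s`, by
`h_N^{-1/2} N^{-3/2} (|K 0| + L N / h_N) ∑_{i ≤ N} |Y_i|`. As `E|Y_i| ≤ σ √i ≤ σ √N`, the mean of
this bound is `O(h_N^{-1/2})`, which tends to `0` because `1 / h_N = (N / h_N) / N → 0`;
Markov's inequality concludes. -/

open MeasureTheory ProbabilityTheory Filter Finset Topology

section Convergence

variable {α ι : Type*} {m : MeasurableSpace α} {μ : Measure α} {l : Filter ι}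

theorem tendstoInMeasure_zero_of_abs_le {F Z : ι → α → ℝ}
    (hZ : TendstoInMeasure μ Z l 0) (hFZ : ∀ i x, |F i x| ≤ Z i x) :
    TendstoInMeasure μ F l 0 := by
  rw [tendstoInMeasure_iff_dist] at hZ ⊢
  intro ε hε
  refine tendsto_of_tendsto_of_tendsto_of_le_of_le tendsto_const_nhds (hZ ε hε)
    (fun _ ↦ zero_le) fun i ↦ measure_mono fun x hx ↦ ?_
  simp only [Set.mem_ofPred_eq, Real.dist_eq, sub_zero, Pi.zero_apply] at hx ⊢
  exact hx.trans ((hFZ i x).trans (le_abs_self _))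

theorem tendstoInMeasure_zero_of_tendsto_integral {Z : ι → α → ℝ}
    (hZ_nonneg : ∀ i x, 0 ≤ Z i x) (hZ_int : ∀ i, Integrable (Z i) μ)
    (hZ : Tendsto (fun i ↦ ∫ x, Z i x ∂μ) l (𝓝 0)) :
    TendstoInMeasure μ Z l 0 := by
  refine tendstoInMeasure_of_tendsto_eLpNorm one_ne_zero (fun i ↦ (hZ_int i).1)
    aestronglyMeasurable_const ?_
  have hnorm : ∀ i, eLpNorm (Z i - 0) 1 μ = ENNReal.ofReal (∫ x, Z i x ∂μ) := fun i ↦ by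
    rw [sub_zero, eLpNorm_one_eq_lintegral_enorm, ← ofReal_integral_norm_eq_lintegral_enorm
      (hZ_int i)]
    simp only [Real.norm_eq_abs, abs_of_nonneg (hZ_nonneg i _)]
  simp_rw [hnorm]
  simpa using ENNReal.tendsto_ofReal hZ

end Convergence

section Moments

variable {Ω : Type*} [MeasurableSpace Ω] {μ : Measure Ω} [IsProbabilityMeasure μ]

theorem integral_abs_le_sqrt_integral_sq {Y : Ω → ℝ} (hY : MemLp Y 2 μ) :
    ∫ ω, |Y ω| ∂μ ≤ √(∫ ω, Y ω ^ 2 ∂μ) := by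
  have h := variance_nonneg (fun ω ↦ |Y ω|) μ
  rw [variance_eq_sub (X := fun ω ↦ |Y ω|) hY.abs] at h
  simp only [Pi.pow_apply, sq_abs] at h
  exact Real.le_sqrt_of_sq_le (by linarith)

theorem integral_abs_sum_le_sqrt {ι : Type*} {X : ι → Ω → ℝ} {s : Finset ι} {σ2 : ℝ}
    (hX : ∀ i ∈ s, MemLp (X i) 2 μ) (hindep : Set.Pairwise ↑s fun i j ↦ X i ⟂ᵢ[μ] X j)
    (hmean : ∀ i ∈ s, μ[X i] = 0) (hvar : ∀ i ∈ s, Var[X i; μ] = σ2) :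
    ∫ ω, |∑ i ∈ s, X i ω| ∂μ ≤ √(#s * σ2) := by
  have hS : MemLp (∑ i ∈ s, X i) 2 μ := memLp_finsetSum' _ hX
  have hS_mean : μ[∑ i ∈ s, X i] = 0 := by
    simp only [Finset.sum_apply]
    rw [integral_finsetSum _ fun i hi ↦ (hX i hi).integrable one_le_two]
    exact sum_eq_zero hmean
  have hS_var : Var[∑ i ∈ s, X i; μ] = #s * σ2 := by
    rw [IndepFun.variance_sum hX hindep, sum_congr rfl hvar, sum_const, nsmul_eq_mul]
  have := integral_abs_le_sqrt_integral_sq hS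
  rw [← variance_of_integral_eq_zero hS.aemeasurable hS_mean, hS_var] at this
  simpa only [Finset.sum_apply] using this

end Moments

noncomputable def kernelSmoother (K : ℝ → ℝ) (b : ℝ) (m : ℕ) (Y : ℕ → ℝ) : ℝ :=
  ∑ i ∈ Icc 1 m, (1 / b) * K (((i : ℝ) - (m : ℝ)) / b) * Y i

section KernelSmoother

variable {K : ℝ → ℝ} {L : ℝ} (hK_lip : ∀ z₁ z₂ : ℝ, |K z₁ - K z₂| ≤ L * |z₁ - z₂|)
include hK_lip

theorem nonneg_of_forall_abs_sub_le_mul_abs_sub : 0 ≤ L := by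
  simpa using (abs_nonneg _).trans (hK_lip 1 0)

theorem abs_le_abs_zero_add_mul_abs (x : ℝ) : |K x| ≤ |K 0| + L * |x| := by
  have := (abs_sub_abs_le_abs_sub (K x) (K 0)).trans (hK_lip x 0)
  rw [sub_zero] at this
  linarith

theorem abs_kernelSmoother_le {b : ℝ} (hb : 0 < b) {m N : ℕ} (hmN : m ≤ N) (Y : ℕ → ℝ) :
    |kernelSmoother K b m Y| ≤ (1 / b) * (|K 0| + L * (N / b)) * ∑ i ∈ Icc 1 N, |Y i| := by
  have hL := nonneg_of_forall_abs_sub_le_mul_abs_sub hK_lip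
  have hweight : ∀ i ∈ Icc 1 m,
      |(1 / b) * K (((i : ℝ) - (m : ℝ)) / b)| ≤ (1 / b) * (|K 0| + L * (N / b)) := by
    intro i hi
    have hdist : |((i : ℝ) - (m : ℝ)) / b| ≤ N / b := by
      rw [abs_div, abs_of_pos hb]
      gcongr
      have him : (i : ℝ) ≤ m := by exact_mod_cast (mem_Icc.mp hi).2
      have hmN' : (m : ℝ) ≤ N := by exact_mod_cast hmN
      rw [abs_sub_comm, abs_of_nonneg (sub_nonneg.mpr him)]
      linarith [i.cast_nonneg (α := ℝ)]
    rw [abs_mul, abs_of_pos (one_div_pos.mpr hb)]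
    gcongr
    exact (abs_le_abs_zero_add_mul_abs hK_lip _).trans (by gcongr)
  calc |kernelSmoother K b m Y|
      ≤ ∑ i ∈ Icc 1 m, |(1 / b) * K (((i : ℝ) - (m : ℝ)) / b)| * |Y i| := by
        rw [kernelSmoother]
        refine (Finset.abs_sum_le_sum_abs _ _).trans_eq ?_
        simp only [abs_mul]
    _ ≤ ∑ i ∈ Icc 1 m, (1 / b) * (|K 0| + L * (N / b)) * |Y i| :=
        sum_le_sum fun i hi ↦ by gcongr; exact hweight i hi
    _ ≤ ∑ i ∈ Icc 1 N, (1 / b) * (|K 0| + L * (N / b)) * |Y i| :=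
        sum_le_sum_of_subset_of_nonneg (Icc_subset_Icc_right hmN) fun _ _ _ ↦ by positivity
    _ = (1 / b) * (|K 0| + L * (N / b)) * ∑ i ∈ Icc 1 N, |Y i| := (mul_sum ..).symm

theorem abs_iSup_abs_mul_kernelSmoother_le {b c : ℝ} (hb : 0 < b) (hc : 0 ≤ c) (N : ℕ) (a : ℝ)
    (Y : ℕ → ℝ) :
    |(⨆ s ∈ Set.Icc a 1, |c * kernelSmoother K b ⌊(N : ℝ) * s⌋₊ Y|)|
      ≤ c * ((1 / b) * (|K 0| + L * (N / b)) * ∑ i ∈ Icc 1 N, |Y i|) := by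
  have hbound_nonneg : 0 ≤ c * ((1 / b) * (|K 0| + L * (N / b)) * ∑ i ∈ Icc 1 N, |Y i|) := by
    have := nonneg_of_forall_abs_sub_le_mul_abs_sub hK_lip
    positivity
  rw [abs_of_nonneg (Real.iSup_nonneg fun s ↦ Real.iSup_nonneg fun _ ↦ abs_nonneg _)]
  refine Real.iSup_le (fun s ↦ Real.iSup_le (fun hs ↦ ?_) hbound_nonneg) hbound_nonneg
  have hfloor : ⌊(N : ℝ) * s⌋₊ ≤ N :=
    Nat.floor_le_of_le (mul_le_of_le_one_right N.cast_nonneg hs.2)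
  rw [abs_mul, abs_of_nonneg hc]
  exact mul_le_mul_of_nonneg_left (abs_kernelSmoother_le hK_lip hb hfloor Y) hc

end KernelSmoother

theorem tendsto_inv_of_tendsto_natCast_div {h : ℕ → ℝ} {ζ : ℝ}
    (hlim : Tendsto (fun N : ℕ ↦ (N : ℝ) / h N) atTop (𝓝 ζ)) :
    Tendsto (fun N ↦ (h N)⁻¹) atTop (𝓝 0) := by
  have := hlim.mul tendsto_inv_atTop_nhds_zero_nat
  rw [mul_zero] at this
  refine this.congr' ?_
  filter_upwards [eventually_ne_atTop 0] with N hN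
  field_simp

theorem tendsto_bandwidth_rate {h : ℕ → ℝ} (hpos : ∀ N, 0 < h N) {ζ : ℝ}
    (hlim : Tendsto (fun N : ℕ ↦ (N : ℝ) / h N) atTop (𝓝 ζ)) (A L σ : ℝ) :
    Tendsto (fun N : ℕ ↦ √(h N) / (N : ℝ) ^ ((3 : ℝ) / 2) *
      ((1 / h N) * (A + L * (N / h N)) * (N * (√N * σ)))) atTop (𝓝 0) := by
  have hsqrt : Tendsto (fun N ↦ √((h N)⁻¹)) atTop (𝓝 0) := by
    have := (Real.continuous_sqrt.tendsto 0).comp (tendsto_inv_of_tendsto_natCast_div hlim)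
    rwa [Real.sqrt_zero] at this
  have := (((tendsto_const_nhds (x := A)).add (hlim.const_mul L)).mul_const σ).mul hsqrt
  rw [mul_zero] at this
  refine this.congr' ?_
  filter_upwards [eventually_gt_atTop 0] with N hN
  have hN' : (0 : ℝ) < N := by exact_mod_cast hN
  have hpow : (N : ℝ) ^ ((3 : ℝ) / 2) = N * √N := by
    rw [show (3 : ℝ) / 2 = 1 + 1 / 2 by norm_num, Real.rpow_add hN', Real.rpow_one,
      Real.sqrt_eq_rpow]
  obtain ⟨t, ht, hht⟩ : ∃ t, 0 < t ∧ h N = t ^ 2 :=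
    ⟨√(h N), Real.sqrt_pos.mpr (hpos N), (Real.sq_sqrt (hpos N).le).symm⟩
  have : 0 < √(N : ℝ) := Real.sqrt_pos.mpr hN'
  rw [hpow, hht, Real.sqrt_inv, Real.sqrt_sq ht.le]
  field_simp

section RandomWalk

variable {Ω : Type*} [MeasurableSpace Ω] {P : Measure Ω} {u : ℕ → Ω → ℝ}

theorem memLp_sum_Icc_of_identDistrib (hid : ∀ i : ℕ, IdentDistrib (u (i + 1)) (u 1) P P)
    (hmem : MemLp (u 1) 2 P) (n : ℕ) : MemLp (fun ω ↦ ∑ j ∈ Icc 1 n, u j ω) 2 P :=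
  memLp_finsetSum _ fun j hj ↦ by
    obtain ⟨k, rfl⟩ : ∃ k, j = k + 1 := ⟨j - 1, by grind⟩
    exact (hid k).memLp_iff.mpr hmem

theorem integral_abs_sum_Icc_le [IsProbabilityMeasure P] {σ2 : ℝ}
    (hind : iIndepFun (fun i : ℕ ↦ u (i + 1)) P)
    (hid : ∀ i : ℕ, IdentDistrib (u (i + 1)) (u 1) P P) (hmem : MemLp (u 1) 2 P)
    (hmean : ∫ ω, u 1 ω ∂P = 0) (hvar : ∫ ω, (u 1 ω) ^ 2 ∂P = σ2) (n : ℕ) :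
    ∫ ω, |∑ j ∈ Icc 1 n, u j ω| ∂P ≤ √n * √σ2 := by
  have hsucc : ∀ j ∈ Icc 1 n, ∃ k, j = k + 1 := fun j hj ↦ ⟨j - 1, by grind⟩
  have hvar1 : Var[u 1; P] = σ2 := by
    rw [variance_of_integral_eq_zero hmem.aemeasurable hmean, hvar]
  have := integral_abs_sum_le_sqrt (μ := P) (s := Icc 1 n) (X := u) (σ2 := σ2)
    (fun j hj ↦ by obtain ⟨k, rfl⟩ := hsucc j hj; exact (hid k).memLp_iff.mpr hmem)
    (fun j hj j' hj' hjj' ↦ by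
      obtain ⟨k, rfl⟩ := hsucc j hj
      obtain ⟨k', rfl⟩ := hsucc j' hj'
      exact hind.indepFun (by omega))
    (fun j hj ↦ by obtain ⟨k, rfl⟩ := hsucc j hj; exact (hid k).integral_eq.trans hmean)
    (fun j hj ↦ by obtain ⟨k, rfl⟩ := hsucc j hj; exact (hid k).variance_eq.trans hvar1)
  rwa [Nat.card_Icc, add_tsub_cancel_right, Real.sqrt_mul n.cast_nonneg] at this

end RandomWalk

theorem sup_stochastic_term_tendsto_zero_in_probability_general
    {Ω : Type*} [MeasurableSpace Ω] (P : Measure Ω) [IsProbabilityMeasure P]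
    (K : ℝ → ℝ) (L : ℝ)
    (hK_lip : ∀ z₁ z₂ : ℝ, |K z₁ - K z₂| ≤ L * |z₁ - z₂|)
    (h : ℕ → ℝ) (hpos : ∀ N, 0 < h N)
    (ζ : ℝ)
    (hlim : Tendsto (fun N : ℕ => (N : ℝ) / h N) atTop (nhds ζ))
    (u : ℕ → Ω → ℝ) (σ2 : ℝ)
    (hind : iIndepFun (fun i : ℕ => u (i + 1)) P)
    (hid : ∀ i : ℕ, IdentDistrib (u (i + 1)) (u 1) P P)
    (hmem : MemLp (u 1) 2 P)
    (hmean : ∫ ω, u 1 ω ∂P = 0)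
    (hvar : ∫ ω, (u 1 ω) ^ 2 ∂P = σ2)
    (a : ℝ) :
    TendstoInMeasure P
      (fun (N : ℕ) (ω : Ω) =>
        ⨆ s ∈ Set.Icc a (1 : ℝ),
          |Real.sqrt (h N) / (N : ℝ) ^ ((3 : ℝ) / 2) *
            ∑ i ∈ Finset.Icc 1 ⌊(N : ℝ) * s⌋₊,
              (1 / h N) * K (((i : ℝ) - (⌊(N : ℝ) * s⌋₊ : ℝ)) / h N) *
                ∑ j ∈ Finset.Icc 1 i, u j ω|)
      atTop (fun _ => (0 : ℝ)) := by
  have hL := nonneg_of_forall_abs_sub_le_mul_abs_sub hK_lip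
  set S : ℕ → Ω → ℝ := fun i ω ↦ ∑ j ∈ Icc 1 i, u j ω
  set Z : ℕ → Ω → ℝ := fun N ω ↦ √(h N) / (N : ℝ) ^ ((3 : ℝ) / 2) *
    ((1 / h N) * (|K 0| + L * (N / h N)) * ∑ i ∈ Icc 1 N, |S i ω|)
  have hS_int : ∀ i, Integrable (S i) P :=
    fun i ↦ (memLp_sum_Icc_of_identDistrib hid hmem i).integrable one_le_two
  have hZ_int : ∀ N, Integrable (Z N) P := fun N ↦
    ((integrable_finsetSum _ fun i _ ↦ (hS_int i).abs).const_mul _).const_mul _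
  have hZ_nonneg : ∀ N ω, 0 ≤ Z N ω := fun N ω ↦ by have := hpos N; positivity
  have hEZ : ∀ N, ∫ ω, Z N ω ∂P ≤ √(h N) / (N : ℝ) ^ ((3 : ℝ) / 2) *
      ((1 / h N) * (|K 0| + L * (N / h N)) * (N * (√N * √σ2))) := fun N ↦ by
    have := hpos N
    simp only [Z, integral_const_mul]
    rw [integral_finsetSum _ fun i _ ↦ (hS_int i).abs]
    gcongr
    refine (sum_le_card_nsmul _ _ (√N * √σ2) fun i hi ↦ ?_).trans_eq (by simp)
    exact (integral_abs_sum_Icc_le hind hid hmem hmean hvar i).trans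
      (by gcongr; exact (mem_Icc.mp hi).2)
  refine tendstoInMeasure_zero_of_abs_le (Z := Z) ?_ fun N ω ↦
    abs_iSup_abs_mul_kernelSmoother_le hK_lip (hpos N) (by positivity) N a (S · ω)
  refine tendstoInMeasure_zero_of_tendsto_integral hZ_nonneg hZ_int ?_
  exact squeeze_zero (fun N ↦ integral_nonneg (hZ_nonneg N)) hEZ
    (tendsto_bandwidth_rate hpos hlim _ L _)

/-- Under assumption (K), a bandwidth sequence with `N/h_N → ζ ∈ [1,∞)`,
a driftless random walk `Y_i = ∑_{j=1}^i u_j` from i.i.d. innovations with mean `0` and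
variance `σ² ∈ (0,∞)`, and fixed `a ∈ (0,1)`,
`sup_{s ∈ [a,1]} |h_N^{1/2} N^{−3/2} ∑_{i=1}^{⌊Ns⌋} (1/h_N) K((i−⌊Ns⌋)/h_N) Y_i| → 0`
in probability as `N → ∞`. -/
theorem sup_stochastic_term_tendsto_zero_in_probability
    {Ω : Type*} [MeasurableSpace Ω] (P : Measure Ω) [IsProbabilityMeasure P]
    (K : ℝ → ℝ) (L : ℝ)
    (hK_lip : ∀ z₁ z₂ : ℝ, |K z₁ - K z₂| ≤ L * |z₁ - z₂|)
    (hK_nonneg : ∀ z, 0 ≤ K z)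
    (hK_int : Integrable K)
    (hK_dens : ∫ z, K z = 1)
    (hK_mean_int : Integrable (fun z => z * K z))
    (hK_mean : ∫ z, z * K z = 0)
    (hK_var : Integrable (fun z => z ^ 2 * K z))
    (h : ℕ → ℝ) (hpos : ∀ N, 0 < h N)
    (ζ : ℝ) (hζ : 1 ≤ ζ)
    (hlim : Tendsto (fun N : ℕ => (N : ℝ) / h N) atTop (nhds ζ))
    (u : ℕ → Ω → ℝ) (σ2 : ℝ) (hσ2 : 0 < σ2)
    (hind : iIndepFun (fun i : ℕ => u (i + 1)) P)
    (hid : ∀ i : ℕ, IdentDistrib (u (i + 1)) (u 1) P P)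
    (hmem : MemLp (u 1) 2 P)
    (hmean : ∫ ω, u 1 ω ∂P = 0)
    (hvar : ∫ ω, (u 1 ω) ^ 2 ∂P = σ2)
    (a : ℝ) (ha : a ∈ Set.Ioo (0 : ℝ) 1) :
    TendstoInMeasure P
      (fun (N : ℕ) (ω : Ω) =>
        ⨆ s ∈ Set.Icc a (1 : ℝ),
          |Real.sqrt (h N) / (N : ℝ) ^ ((3 : ℝ) / 2) *
            ∑ i ∈ Finset.Icc 1 ⌊(N : ℝ) * s⌋₊,
              (1 / h N) * K (((i : ℝ) - (⌊(N : ℝ) * s⌋₊ : ℝ)) / h N) *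
                ∑ j ∈ Finset.Icc 1 i, u j ω|)
      atTop (fun _ => (0 : ℝ)) :=
  sup_stochastic_term_tendsto_zero_in_probability_general P K L hK_lip h hpos ζ hlim u σ2 hind hid
    hmem hmean hvar a
end

section
/- (Proposition 1: asymptotic unbiasedness of the Gasser-type variance estimator.) Let (h_N) be a bandwidth sequence with N/h_N → ζ ∈ [1,∞), let m₀ : ℝ → ℝ be twice continuously differentiable with bounded first and second derivatives, fix q ∈ ℕ and β ∈ (−1, 0], let u_1, u_2, … be i.i.d. real random variables with E(u_1) = 0 and E(u_1²) = σ² ∈ (0,∞), and define Y_{N,1} = 0 and Y_{N,n+1} = Y_{N,n} + m₀((n − q)/h_N) h_N^{β} + u_n for 1 ≤ n ≤ N. Define the differences ΔY_i = Y_{N,i} − Y_{N,i−1} (for 2 ≤ i ≤ N), the pseudo-residuals ε̃_i = 0.5 ΔY_{i−1} + 0.5 ΔY_{i+1} − ΔY_i (for 3 ≤ i ≤ N−1), and the estimator σ̃_N² = (2 / (3(N−3))) ∑_{i=3}^{N−1} ε̃_i². Then E(σ̃_N²) → σ² as N → ∞. -/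
/-!
Write `ΔY_{n+1} = d_n + u_n` with the deterministic drift `d_n = m₀((n - q)/h_N) h_N^β`. Each
pseudo-residual is the second difference `(½, -1, ½)` of `ΔY`, so it splits into the second
difference of the drift plus that of three independent innovations. The latter has mean zero and
second moment `(¼ + 1 + ¼) σ² = 3σ²/2`, which the factor `2/3` normalises, so
`E σ̃_N² = σ² + (2/3) · mean of the squared drift second differences`. By the mean value theorem
each drift difference is at most `C h_N^{β-1}`, which tends to `0` because `β < 1` and
`h_N → ∞`.
-/

open MeasureTheory ProbabilityTheory Filter
open scoped Topology

theorem tendsto_atTop_of_tendsto_natCast_div {f : ℕ → ℝ} {ζ : ℝ} (hpos : ∀ n, 0 < f n)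
    (hlim : Tendsto (fun n : ℕ => (n : ℝ) / f n) atTop (𝓝 ζ)) : Tendsto f atTop atTop := by
  have hc : 0 < |ζ| + 1 := by positivity
  refine tendsto_atTop_mono' atTop ?_ (tendsto_natCast_atTop_atTop.atTop_div_const hc)
  filter_upwards [hlim.eventually_lt_const ((le_abs_self ζ).trans_lt (lt_add_one _))] with n hn
  rw [div_lt_iff₀ (hpos n)] at hn
  rw [div_le_iff₀ hc]
  linarith

theorem sum_range_sq_div_le {a : ℕ → ℝ} {δ : ℝ} (n : ℕ) (ha : ∀ j < n, |a j| ≤ δ) :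
    (∑ j ∈ Finset.range n, a j ^ 2) / n ≤ δ ^ 2 := by
  refine div_le_of_le_mul₀ n.cast_nonneg (sq_nonneg δ) ?_
  calc ∑ j ∈ Finset.range n, a j ^ 2 ≤ (Finset.range n).card • δ ^ 2 :=
        Finset.sum_le_card_nsmul _ _ _ fun j hj =>
          sq_le_sq' (abs_le.mp (ha j (Finset.mem_range.mp hj))).1
            (abs_le.mp (ha j (Finset.mem_range.mp hj))).2
    _ = δ ^ 2 * n := by rw [Finset.card_range, nsmul_eq_mul, mul_comm]

theorem integral_sq_const_add_sum_mul {Ω ι : Type*} [MeasurableSpace Ω] {P : Measure Ω}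
    [IsProbabilityMeasure P] (s : Finset ι) {X : ι → Ω → ℝ} (c : ι → ℝ) (a σ2 : ℝ)
    (hind : Set.Pairwise s fun i j => IndepFun (X i) (X j) P)
    (hmem : ∀ i ∈ s, MemLp (X i) 2 P) (hmean : ∀ i ∈ s, ∫ ω, X i ω ∂P = 0)
    (hvar : ∀ i ∈ s, ∫ ω, X i ω ^ 2 ∂P = σ2) :
    ∫ ω, (a + ∑ i ∈ s, c i * X i ω) ^ 2 ∂P = a ^ 2 + (∑ i ∈ s, c i ^ 2) * σ2 := by
  set Z : ι → Ω → ℝ := fun i ω => c i * X i ω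
  have hZ : ∀ i ∈ s, MemLp (Z i) 2 P := fun i hi => (hmem i hi).const_mul (c i)
  have hZ_int : ∀ i ∈ s, Integrable (Z i) P := fun i hi => (hZ i hi).integrable one_le_two
  have hS : MemLp (fun ω => a + ∑ i ∈ s, Z i ω) 2 P := (memLp_const a).add (memLp_finsetSum s hZ)
  have hS_mean : ∫ ω, a + ∑ i ∈ s, Z i ω ∂P = a := by
    rw [integral_add (integrable_const a) (integrable_finsetSum s hZ_int),
      integral_finsetSum s hZ_int]
    simp only [Z, integral_const_mul, integral_const, smul_eq_mul, probReal_univ, one_mul]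
    rw [Finset.sum_eq_zero fun i hi => by rw [hmean i hi, mul_zero], add_zero]
  have hS_var : Var[fun ω => a + ∑ i ∈ s, Z i ω; P] = (∑ i ∈ s, c i ^ 2) * σ2 := by
    have hZ_ind : Set.Pairwise s fun i j => IndepFun (Z i) (Z j) P := fun i hi j hj hij =>
      (hind hi hj hij).comp (measurable_const_mul (c i)) (measurable_const_mul (c j))
    have hX_var : ∀ i ∈ s, Var[X i; P] = σ2 := fun i hi => by
      rw [variance_eq_sub (hmem i hi)]; simp [hmean i hi, hvar i hi]
    rw [variance_const_add (memLp_finsetSum s hZ).aestronglyMeasurable, ← Finset.sum_fn,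
      IndepFun.variance_sum hZ hZ_ind, Finset.sum_mul]
    exact Finset.sum_congr rfl fun i hi => by rw [variance_const_mul, hX_var i hi]
  have := variance_eq_sub hS
  rw [hS_mean, hS_var] at this
  simp only [Pi.pow_apply, Z] at this
  linarith

noncomputable def secondDiff (x : ℕ → ℝ) (n : ℕ) : ℝ := x n / 2 + x (n + 2) / 2 - x (n + 1)

theorem secondDiff_eq_sum (x : ℕ → ℝ) (n : ℕ) :
    secondDiff x n = ∑ k : Fin 3, ![1 / 2, -1, 1 / 2] k * x (n + k) := by
  simp [secondDiff, Fin.sum_univ_three, Matrix.cons_val]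
  ring

theorem abs_secondDiff_le {x : ℕ → ℝ} {δ : ℝ} (hx : ∀ n, |x (n + 1) - x n| ≤ δ) (n : ℕ) :
    |secondDiff x n| ≤ δ := by
  have h₁ := abs_le.mp (hx n)
  have h₂ := abs_le.mp (hx (n + 1))
  rw [secondDiff, abs_le]
  constructor <;> linarith [h₁.1, h₁.2, h₂.1, h₂.2]

section Innovations

variable {Ω : Type*} [MeasurableSpace Ω] {P : Measure Ω} {X : ℕ → Ω → ℝ} {σ2 : ℝ}

theorem memLp_secondDiff (hmem : ∀ n, MemLp (X n) 2 P) (n : ℕ) :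
    MemLp (fun ω => secondDiff (X · ω) n) 2 P := by
  simp_rw [secondDiff_eq_sum]
  exact memLp_finsetSum _ fun k _ => (hmem _).const_mul _

theorem integral_sq_const_add_secondDiff [IsProbabilityMeasure P] (hind : iIndepFun X P)
    (hmem : ∀ n, MemLp (X n) 2 P)
    (hmean : ∀ n, ∫ ω, X n ω ∂P = 0) (hvar : ∀ n, ∫ ω, X n ω ^ 2 ∂P = σ2) (a : ℝ) (n : ℕ) :
    ∫ ω, (a + secondDiff (X · ω) n) ^ 2 ∂P = a ^ 2 + 3 / 2 * σ2 := by
  simp_rw [secondDiff_eq_sum]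
  rw [integral_sq_const_add_sum_mul (X := fun k : Fin 3 => X (n + k)) Finset.univ _ a σ2
    (fun k _ l _ hkl => hind.indepFun (by simpa [Fin.val_inj] using hkl))
    (fun k _ => hmem _) (fun k _ => hmean _) (fun k _ => hvar _)]
  simp [Fin.sum_univ_three, Matrix.cons_val]
  norm_num

end Innovations

noncomputable def gasserDrift (m₀ : ℝ → ℝ) (s : ℝ) (q : ℕ) (β : ℝ) (n : ℕ) : ℝ :=
  m₀ (((n : ℝ) - (q : ℝ)) / s) * s ^ β

theorem abs_gasserDrift_succ_sub_le {m₀ : ℝ → ℝ} {C s : ℝ} (hm₀ : Differentiable ℝ m₀)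
    (hC : ∀ x, |deriv m₀ x| ≤ C) (hs : 0 < s) (q : ℕ) (β : ℝ) (n : ℕ) :
    |gasserDrift m₀ s q β (n + 1) - gasserDrift m₀ s q β n| ≤ C * s ^ (β - 1) := by
  have hlip : |m₀ ((n + 1 - q) / s) - m₀ ((n - q) / s)| ≤ C * |(n + 1 - q) / s - (n - q) / s| :=
    Convex.norm_image_sub_le_of_norm_deriv_le (fun x _ => hm₀.differentiableAt) (fun x _ => hC x)
      convex_univ (Set.mem_univ _) (Set.mem_univ _)
  have hgap : ((n : ℝ) + 1 - q) / s - (n - q) / s = s⁻¹ := by field_simp; ring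
  rw [hgap, abs_of_pos (inv_pos.mpr hs)] at hlip
  calc |gasserDrift m₀ s q β (n + 1) - gasserDrift m₀ s q β n|
      = |m₀ ((n + 1 - q) / s) - m₀ ((n - q) / s)| * s ^ β := by
        rw [gasserDrift, gasserDrift, ← sub_mul, abs_mul, abs_of_pos (Real.rpow_pos_of_pos hs β)]
        push_cast
        rfl
    _ ≤ C * s⁻¹ * s ^ β := by gcongr
    _ = C * s ^ (β - 1) := by rw [Real.rpow_sub hs, Real.rpow_one]; ring

noncomputable def pseudoResidual (y : ℕ → ℝ) (i : ℕ) : ℝ :=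
  (0.5 : ℝ) * (y (i - 1) - y (i - 2)) + (0.5 : ℝ) * (y (i + 1) - y i) - (y i - y (i - 1))

noncomputable def gasserEstimator (y : ℕ → ℝ) (N : ℕ) : ℝ :=
  2 / (3 * ((N : ℝ) - 3)) * ∑ i ∈ Finset.Icc 3 (N - 1), pseudoResidual y i ^ 2

theorem pseudoResidual_add_three (y : ℕ → ℝ) (j : ℕ) :
    pseudoResidual y (j + 3) = secondDiff (fun n => y (n + 1) - y n) (j + 1) := by
  simp only [pseudoResidual, secondDiff, show j + 3 - 1 = j + 2 from rfl,
    show j + 3 - 2 = j + 1 from rfl]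
  ring

theorem gasserEstimator_eq (y : ℕ → ℝ) (N : ℕ) :
    gasserEstimator y N = 2 / (3 * ((N : ℝ) - 3)) *
      ∑ j ∈ Finset.range (N - 3), secondDiff (fun n => y (n + 1) - y n) (j + 1) ^ 2 := by
  have hIcc : Finset.Icc 3 (N - 1) = Finset.Ico 3 N := by ext; simp; omega
  rw [gasserEstimator, hIcc, Finset.sum_Ico_eq_sum_range]
  simp_rw [add_comm 3, pseudoResidual_add_three]

theorem integral_gasserEstimator_eq {Ω : Type*} [MeasurableSpace Ω] {P : Measure Ω}
    [IsProbabilityMeasure P] {u : ℕ → Ω → ℝ} {σ2 : ℝ}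
    (hind : iIndepFun (fun i => u (i + 1)) P) (hmem : ∀ i, MemLp (u (i + 1)) 2 P)
    (hmean : ∀ i, ∫ ω, u (i + 1) ω ∂P = 0) (hvar : ∀ i, ∫ ω, u (i + 1) ω ^ 2 ∂P = σ2)
    {Y : ℕ → Ω → ℝ} {d : ℕ → ℝ} {N : ℕ}
    (hY : ∀ ω, ∀ n, 1 ≤ n → n ≤ N → Y (n + 1) ω = Y n ω + d n + u n ω) (hN : 4 ≤ N) :
    ∫ ω, gasserEstimator (Y · ω) N ∂P
      = σ2 + 2 / 3 * ((∑ j ∈ Finset.range (N - 3), secondDiff d (j + 1) ^ 2) / (N - 3 : ℕ)) := by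
  set ε : ℕ → Ω → ℝ := fun j ω => secondDiff d (j + 1) + secondDiff (fun i => u (i + 1) ω) j
  have hresidual : ∀ ω, ∀ j ∈ Finset.range (N - 3),
      secondDiff (fun n => Y (n + 1) ω - Y n ω) (j + 1) = ε j ω := by
    intro ω j hj
    have hj := Finset.mem_range.mp hj
    simp only [ε, secondDiff, hY ω (j + 1) (by omega) (by omega),
      hY ω (j + 2) (by omega) (by omega), hY ω (j + 3) (by omega) (by omega)]
    ring
  have hε_int : ∀ j ∈ Finset.range (N - 3), Integrable (fun ω => ε j ω ^ 2) P := fun j _ =>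
    ((memLp_const (secondDiff d (j + 1))).add
      (memLp_secondDiff (X := fun i => u (i + 1)) hmem j)).integrable_sq
  have hcast : ((N - 3 : ℕ) : ℝ) = (N : ℝ) - 3 := by
    push_cast [Nat.cast_sub (by omega : 3 ≤ N)]; ring
  have hN₃ : (N : ℝ) - 3 ≠ 0 := by rw [← hcast]; exact_mod_cast (by omega : N - 3 ≠ 0)
  calc ∫ ω, gasserEstimator (Y · ω) N ∂P
      = 2 / (3 * ((N : ℝ) - 3)) * ∑ j ∈ Finset.range (N - 3), ∫ ω, ε j ω ^ 2 ∂P := by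
        simp_rw [gasserEstimator_eq]
        rw [← integral_finsetSum _ hε_int, ← integral_const_mul]
        refine integral_congr_ae (Eventually.of_forall fun ω => ?_)
        exact congrArg _ (Finset.sum_congr rfl fun j hj => by rw [hresidual ω j hj])
    _ = 2 / (3 * ((N : ℝ) - 3)) *
          ∑ j ∈ Finset.range (N - 3), (secondDiff d (j + 1) ^ 2 + 3 / 2 * σ2) := by
        simp_rw [ε, integral_sq_const_add_secondDiff (X := fun i => u (i + 1)) hind hmem hmean hvar]
    _ = _ := by
        rw [Finset.sum_add_distrib, Finset.sum_const, Finset.card_range, nsmul_eq_mul, hcast]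
        field_simp
        ring

theorem gasser_estimator_asymptotically_unbiased_general
    {Ω : Type*} [MeasurableSpace Ω] (P : Measure Ω) [IsProbabilityMeasure P]
    (h : ℕ → ℝ) (hpos : ∀ N, 0 < h N)
    (ζ : ℝ)
    (hlim : Tendsto (fun N : ℕ => (N : ℝ) / h N) atTop (nhds ζ))
    (m₀ : ℝ → ℝ) (hm₀_smooth : ContDiff ℝ 2 m₀)
    (hm₀_deriv_bdd : ∃ C : ℝ, ∀ x : ℝ, |deriv m₀ x| ≤ C)
    (q : ℕ) (β : ℝ) (hβ : β ∈ Set.Ioc (-1 : ℝ) 0)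
    (u : ℕ → Ω → ℝ) (σ2 : ℝ)
    (hind : iIndepFun (fun i : ℕ => u (i + 1)) P)
    (hid : ∀ i : ℕ, IdentDistrib (u (i + 1)) (u 1) P P)
    (hmem : MemLp (u 1) 2 P)
    (hmean : ∫ ω, u 1 ω ∂P = 0)
    (hvar : ∫ ω, (u 1 ω) ^ 2 ∂P = σ2)
    (Y : ℕ → ℕ → Ω → ℝ)
    (hY : ∀ N : ℕ, ∀ ω : Ω, Y N 1 ω = 0 ∧ ∀ n : ℕ, 1 ≤ n → n ≤ N →
      Y N (n + 1) ω
        = Y N n ω + m₀ (((n : ℝ) - (q : ℝ)) / h N) * h N ^ β + u n ω) :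
    Tendsto
      (fun N : ℕ =>
        ∫ ω,
          (2 / (3 * ((N : ℝ) - 3)) *
            ∑ i ∈ Finset.Icc 3 (N - 1),
              ((0.5 : ℝ) * (Y N (i - 1) ω - Y N (i - 2) ω)
                + (0.5 : ℝ) * (Y N (i + 1) ω - Y N i ω)
                - (Y N i ω - Y N (i - 1) ω)) ^ 2) ∂P)
      atTop (nhds σ2) := by
  obtain ⟨C, hC⟩ := hm₀_deriv_bdd
  set bias : ℕ → ℝ := fun N => 2 / 3 *
    ((∑ j ∈ Finset.range (N - 3), secondDiff (gasserDrift m₀ (h N) q β) (j + 1) ^ 2) / (N - 3 : ℕ))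
  have hbias_le : ∀ N, bias N ≤ 2 / 3 * (C * h N ^ (β - 1)) ^ 2 := fun N =>
    mul_le_mul_of_nonneg_left (sum_range_sq_div_le _ fun j _ => abs_secondDiff_le
      (abs_gasserDrift_succ_sub_le (hm₀_smooth.differentiable two_ne_zero) hC (hpos N) q β) _)
      (by norm_num)
  have hstep : Tendsto (fun N => C * h N ^ (β - 1)) atTop (𝓝 0) := by
    simpa using ((tendsto_rpow_neg_atTop (by linarith [hβ.2] : 0 < 1 - β)).comp
      (tendsto_atTop_of_tendsto_natCast_div hpos hlim)).const_mul C
  have hbias : Tendsto bias atTop (𝓝 0) :=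
    squeeze_zero (fun N => by positivity) hbias_le (by simpa using (hstep.pow 2).const_mul (2 / 3))
  have hmem' : ∀ i, MemLp (u (i + 1)) 2 P := fun i => (hid i).symm.memLp_snd hmem
  have hmean' : ∀ i, ∫ ω, u (i + 1) ω ∂P = 0 := fun i => (hid i).integral_eq.trans hmean
  have hvar' : ∀ i, ∫ ω, u (i + 1) ω ^ 2 ∂P = σ2 := fun i =>
    ((hid i).comp (measurable_id.pow_const 2)).integral_eq.trans hvar
  refine (by simpa using hbias.const_add σ2 : Tendsto (fun N => σ2 + bias N) atTop (𝓝 σ2)).congr' ?_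
  filter_upwards [eventually_ge_atTop 4] with N hN
  exact (integral_gasserEstimator_eq hind hmem' hmean' hvar' (fun ω => (hY N ω).2) hN).symm

/-- Proposition 1: asymptotic unbiasedness of the Gasser-type variance
estimator: for a bandwidth with `N/h_N → ζ ∈ [1,∞)`, a twice continuously
differentiable drift `m₀` with bounded first and second derivatives, `q ∈ ℕ`,
`β ∈ (−1,0]`, i.i.d. innovations with mean `0` and variance `σ² ∈ (0,∞)`, and the walk
`Y_{N,n+1} = Y_{N,n} + m₀((n−q)/h_N) h_N^β + u_n`, the Gasser-type estimator
`σ̃_N² = (2/(3(N−3))) ∑_{i=3}^{N−1} ε̃_i²` built from the pseudo-residuals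
`ε̃_i = 0.5 ΔY_{i−1} + 0.5 ΔY_{i+1} − ΔY_i` satisfies `E(σ̃_N²) → σ²`. -/
theorem gasser_estimator_asymptotically_unbiased
    {Ω : Type*} [MeasurableSpace Ω] (P : Measure Ω) [IsProbabilityMeasure P]
    (h : ℕ → ℝ) (hpos : ∀ N, 0 < h N)
    (ζ : ℝ) (hζ : 1 ≤ ζ)
    (hlim : Tendsto (fun N : ℕ => (N : ℝ) / h N) atTop (nhds ζ))
    (m₀ : ℝ → ℝ) (hm₀_smooth : ContDiff ℝ 2 m₀)
    (hm₀_deriv_bdd : ∃ C : ℝ, ∀ x : ℝ, |deriv m₀ x| ≤ C)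
    (hm₀_deriv2_bdd : ∃ C : ℝ, ∀ x : ℝ, |deriv (deriv m₀) x| ≤ C)
    (q : ℕ) (β : ℝ) (hβ : β ∈ Set.Ioc (-1 : ℝ) 0)
    (u : ℕ → Ω → ℝ) (σ2 : ℝ) (hσ2 : 0 < σ2)
    (hind : iIndepFun (fun i : ℕ => u (i + 1)) P)
    (hid : ∀ i : ℕ, IdentDistrib (u (i + 1)) (u 1) P P)
    (hmem : MemLp (u 1) 2 P)
    (hmean : ∫ ω, u 1 ω ∂P = 0)
    (hvar : ∫ ω, (u 1 ω) ^ 2 ∂P = σ2)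
    (Y : ℕ → ℕ → Ω → ℝ)
    (hY : ∀ N : ℕ, ∀ ω : Ω, Y N 1 ω = 0 ∧ ∀ n : ℕ, 1 ≤ n → n ≤ N →
      Y N (n + 1) ω
        = Y N n ω + m₀ (((n : ℝ) - (q : ℝ)) / h N) * h N ^ β + u n ω) :
    Tendsto
      (fun N : ℕ =>
        ∫ ω,
          (2 / (3 * ((N : ℝ) - 3)) *
            ∑ i ∈ Finset.Icc 3 (N - 1),
              ((0.5 : ℝ) * (Y N (i - 1) ω - Y N (i - 2) ω)
                + (0.5 : ℝ) * (Y N (i + 1) ω - Y N i ω)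
                - (Y N i ω - Y N (i - 1) ω)) ^ 2) ∂P)
      atTop (nhds σ2) :=
  gasser_estimator_asymptotically_unbiased_general P h hpos ζ hlim m₀ hm₀_smooth hm₀_deriv_bdd q β
    hβ u σ2 hind hid hmem hmean hvar Y hY
end
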